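/- arXiv:2307.02735 — 8 statements merged into one kernel-verified Lean document; each statement's English description precedes it below -/
import Mathlib

section
/- Identification under conditional parallel trends (Proposition 1): suppose no anticipation and conditional parallel trends hold. Then for every stratum r ∈ R, every g, g' ∈ 𝔾 and t, t* ∈ 𝕋 with t* < g ≤ t < g', μ(G_r = g) > 0 and μ(G_r = g') > 0, the conditional group-time ATT is identified by the difference-in-differences of observed outcomes: ATT_r(g,t) = (E[Y_{rt} − Y_{rt*} | G_r = g]) − (E[Y_{rt} − Y_{rt*} | G_r = g']). -/
open MeasureTheory ProbabilityTheory

/-- The set of time periods `{1, …, T}`. -/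
def TimeSet (T : ℕ) : Set ℕ := Set.Icc 1 T

/-- The set of treatment-initiation values `{2, …, T} ∪ {∞}`. -/
def GSet (T : ℕ) : Set ℕ∞ :=
  {g | g = ⊤ ∨ ∃ n : ℕ, 2 ≤ n ∧ n ≤ T ∧ g = (n : ℕ∞)}

/-- Expectation of `f` under the conditional probability measure `μ(· | A)`. -/
noncomputable def condMean {Ω : Type*} [MeasurableSpace Ω] (μ : Measure Ω)
    (A : Set Ω) (f : Ω → ℝ) : ℝ :=
  ∫ ω, f ω ∂(μ[|A])

/-- The conditional group-time ATT:
`ATT_r(g,t) = E[Y_{rt}(g) − Y_{rt}(∞) | G_r = g]`. -/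
noncomputable def ATT {Ω R : Type*} [MeasurableSpace Ω] (μ : Measure Ω)
    (G : R → Ω → ℕ∞) (Y : R → ℕ → ℕ∞ → Ω → ℝ) (r : R) (g : ℕ∞) (t : ℕ) : ℝ :=
  condMean μ {ω | G r ω = g} (fun ω => Y r t g ω - Y r t ⊤ ω)


section Aux
variable {Ω : Type*} [MeasurableSpace Ω] (μ : Measure Ω) (A : Set Ω)

lemma integrable_condAux [IsProbabilityMeasure μ] {f : Ω → ℝ} (hA : μ A ≠ 0)
    (hf : Integrable f μ) : Integrable f (μ[|A]) := by
  rw [ProbabilityTheory.cond]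
  exact (hf.restrict).smul_measure (by simp [ENNReal.inv_ne_top, hA])

lemma condMean_congr_on {f k : Ω → ℝ} (hA : MeasurableSet A)
    (h : ∀ ω ∈ A, f ω = k ω) : condMean μ A f = condMean μ A k := by
  unfold condMean
  rw [ProbabilityTheory.cond, integral_smul_measure, integral_smul_measure]
  congr 1
  exact integral_congr_ae ((ae_restrict_iff' hA).mpr (ae_of_all _ h))

lemma condMean_congr_ae {f k : Ω → ℝ} (h : f =ᵐ[μ] k) :
    condMean μ A f = condMean μ A k :=
  integral_congr_ae (ProbabilityTheory.cond_absolutelyContinuous.ae_eq h)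

lemma condMean_sub [IsProbabilityMeasure μ] {f k : Ω → ℝ} (hA : μ A ≠ 0)
    (hf : Integrable f μ) (hk : Integrable k μ) :
    condMean μ A (fun ω => f ω - k ω) = condMean μ A f - condMean μ A k :=
  integral_sub (integrable_condAux μ A hA hf) (integrable_condAux μ A hA hk)

end Aux

/-- Proposition 1: identification of the conditional group-time ATT by the
difference-in-differences of observed outcomes, under no anticipation and conditional
parallel trends. The observed outcome is `Y_{rt}(ω) = Y_{rt}(G_r(ω))(ω)`. -/
theorem att_identified_by_did
    {Ω : Type*} [MeasurableSpace Ω] (μ : Measure Ω) [IsProbabilityMeasure μ]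
    {R : Type*} (T : ℕ)
    (G : R → Ω → ℕ∞) (Y : R → ℕ → ℕ∞ → Ω → ℝ)
    (hGmeas : ∀ r, Measurable (G r))
    (hYmeas : ∀ r t g, Measurable (Y r t g))
    (hYint : ∀ r t g, Integrable (Y r t g) μ)
    -- No anticipation
    (hNA : ∀ (r : R) (g : ℕ∞) (t : ℕ), g ∈ GSet T → t ∈ TimeSet T →
      (t : ℕ∞) < g → Y r t g =ᵐ[μ] Y r t ⊤)
    -- Conditional parallel trends
    (hPT : ∀ (r : R) (t t' : ℕ) (g g' : ℕ∞), t ∈ TimeSet T → t' ∈ TimeSet T → t ≠ t' →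
      g ∈ GSet T → g' ∈ GSet T → g ≠ g' →
      0 < μ {ω | G r ω = g} → 0 < μ {ω | G r ω = g'} →
      condMean μ {ω | G r ω = g} (fun ω => Y r t ⊤ ω - Y r t' ⊤ ω) =
        condMean μ {ω | G r ω = g'} (fun ω => Y r t ⊤ ω - Y r t' ⊤ ω)) :
    ∀ (r : R) (g g' : ℕ∞) (t tstar : ℕ), g ∈ GSet T → g' ∈ GSet T →
      t ∈ TimeSet T → tstar ∈ TimeSet T →
      (tstar : ℕ∞) < g → g ≤ (t : ℕ∞) → (t : ℕ∞) < g' →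
      0 < μ {ω | G r ω = g} → 0 < μ {ω | G r ω = g'} →
      ATT μ G Y r g t =
        condMean μ {ω | G r ω = g}
          (fun ω => Y r t (G r ω) ω - Y r tstar (G r ω) ω) -
        condMean μ {ω | G r ω = g'}
          (fun ω => Y r t (G r ω) ω - Y r tstar (G r ω) ω) := by
  intro r g g' t tstar hg hg' ht htstar hlt1 hle2 hlt3 hpos hpos'
  set S := {ω | G r ω = g} with hS
  set S' := {ω | G r ω = g'} with hS'
  have hSmeas : MeasurableSet S := (hGmeas r) (measurableSet_singleton g)
  have hS'meas : MeasurableSet S' := (hGmeas r) (measurableSet_singleton g')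
  have hSne : μ S ≠ 0 := hpos.ne'
  have hS'ne : μ S' ≠ 0 := hpos'.ne'
  have hgg' : g ≠ g' := fun h => absurd (h ▸ hle2) (not_le.mpr hlt3)
  have httstar : t ≠ tstar := by
    have : (tstar : ℕ∞) < (t : ℕ∞) := lt_of_lt_of_le hlt1 hle2
    exact fun h => absurd this (by simp [h])
  -- rewrite the first observed condMean
  have e1 : condMean μ S (fun ω => Y r t (G r ω) ω - Y r tstar (G r ω) ω)
      = condMean μ S (fun ω => Y r t g ω - Y r tstar ⊤ ω) := by
    rw [condMean_congr_on μ S hSmeas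
      (f := fun ω => Y r t (G r ω) ω - Y r tstar (G r ω) ω)
      (k := fun ω => Y r t g ω - Y r tstar g ω)
      (fun ω hω => by simp only [hS, Set.mem_setOf_eq] at hω; simp only [hω])]
    exact condMean_congr_ae μ S ((hNA r g tstar hg htstar hlt1).mono
      (fun ω hω => by simp [hω]))
  -- rewrite the second observed condMean
  have e2 : condMean μ S' (fun ω => Y r t (G r ω) ω - Y r tstar (G r ω) ω)
      = condMean μ S' (fun ω => Y r t ⊤ ω - Y r tstar ⊤ ω) := by
    rw [condMean_congr_on μ S' hS'meas
      (f := fun ω => Y r t (G r ω) ω - Y r tstar (G r ω) ω)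
      (k := fun ω => Y r t g' ω - Y r tstar g' ω)
      (fun ω hω => by simp only [hS', Set.mem_setOf_eq] at hω; simp only [hω])]
    exact condMean_congr_ae μ S'
      (((hNA r g' t hg' ht hlt3).sub
        (hNA r g' tstar hg' htstar (lt_trans (lt_of_lt_of_le hlt1 hle2) hlt3))))
  rw [e1, e2, ← hPT r t tstar g g' ht htstar httstar hg hg' hgg' hpos hpos']
  rw [show (fun ω => Y r t g ω - Y r tstar ⊤ ω)
      = fun ω => Y r t g ω - Y r tstar ⊤ ω from rfl]
  unfold ATT
  rw [condMean_sub μ S hSne (hYint r t g) (hYint r tstar ⊤),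
      condMean_sub μ S hSne (hYint r t ⊤) (hYint r tstar ⊤),
      condMean_sub μ S hSne (hYint r t g) (hYint r t ⊤)]
  ring
end

section
/- Frisch–Waugh–Lovell closed form for the triple-differences regression (Lemma 1): let Y, D : S × R × T → ℝ with D taking values in {0,1}, and suppose ∑_{s,r,t} (D̃_{srt})² ≠ 0. If τ̂ is a triple-differences regression OLS estimator for (Y, D), then τ̂ = (∑_{s,r,t} D_{srt}·(Y_{srt} − Ȳ_{sr} − Ȳ_{st} − Ȳ_{rt} + Ȳ̿_s + Ȳ̿_r + Ȳ̿_t − Ȳ̿̿)) / (∑_{s,r,t} (D̃_{srt})²), i.e., τ̂ = (∑_{s,r,t} D_{srt}·Ỹ_{srt}) / (∑_{s,r,t} (D̃_{srt})²). -/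
open Finset

/-- The triple-demeaned function
`X̃_{srt} = X_{srt} − X̄_{sr} − X̄_{st} − X̄_{rt} + X̿_s + X̿_r + X̿_t − X̿̿`. -/
noncomputable def tripleDemean {S R T : Type*} [Fintype S] [Fintype R] [Fintype T]
    (X : S → R → T → ℝ) (s : S) (r : R) (t : T) : ℝ :=
  X s r t
    - (∑ t', X s r t') / (Fintype.card T : ℝ)
    - (∑ r', X s r' t) / (Fintype.card R : ℝ)
    - (∑ s', X s' r t) / (Fintype.card S : ℝ)
    + (∑ r', ∑ t', X s r' t') / ((Fintype.card R : ℝ) * (Fintype.card T : ℝ))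
    + (∑ s', ∑ t', X s' r t') / ((Fintype.card S : ℝ) * (Fintype.card T : ℝ))
    + (∑ s', ∑ r', X s' r' t) / ((Fintype.card S : ℝ) * (Fintype.card R : ℝ))
    - (∑ s', ∑ r', ∑ t', X s' r' t') /
        ((Fintype.card S : ℝ) * (Fintype.card R : ℝ) * (Fintype.card T : ℝ))

/-- The objective function of the triple-differences regression. -/
def tdObjective {S R T : Type*} [Fintype S] [Fintype R] [Fintype T]
    (Y D : S → R → T → ℝ) (τ : ℝ) (α : S → R → ℝ) (γ : S → T → ℝ) (δ : R → T → ℝ) : ℝ :=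
  ∑ s, ∑ r, ∑ t, (Y s r t - τ * D s r t - α s r - γ s t - δ r t) ^ 2

/-- `τ̂` is a triple-differences regression OLS estimator for `(Y, D)` if together with some
fixed effects `α, γ, δ` it minimizes the least-squares objective. -/
def IsTDOLS {S R T : Type*} [Fintype S] [Fintype R] [Fintype T]
    (Y D : S → R → T → ℝ) (τhat : ℝ) : Prop :=
  ∃ (α : S → R → ℝ) (γ : S → T → ℝ) (δ : R → T → ℝ),
    ∀ (τ' : ℝ) (α' : S → R → ℝ) (γ' : S → T → ℝ) (δ' : R → T → ℝ),
      tdObjective Y D τhat α γ δ ≤ tdObjective Y D τ' α' γ' δ'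

section Aux

variable {S R T : Type*} [Fintype S] [Fintype R] [Fintype T]
variable [Nonempty S] [Nonempty R] [Nonempty T]

lemma sum_td_t (X : S → R → T → ℝ) (s : S) (r : R) :
    ∑ t, tripleDemean X s r t = 0 := by
  have hS : (Fintype.card S : ℝ) ≠ 0 := Nat.cast_ne_zero.mpr Fintype.card_ne_zero
  have hR : (Fintype.card R : ℝ) ≠ 0 := Nat.cast_ne_zero.mpr Fintype.card_ne_zero
  have hT : (Fintype.card T : ℝ) ≠ 0 := Nat.cast_ne_zero.mpr Fintype.card_ne_zero
  have h1 : ∑ t, ∑ r', X s r' t = ∑ r', ∑ t', X s r' t' := Finset.sum_comm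
  have h2 : ∑ t, ∑ s', X s' r t = ∑ s', ∑ t', X s' r t' := Finset.sum_comm
  have h3 : ∑ t, ∑ s', ∑ r', X s' r' t = ∑ s', ∑ r', ∑ t', X s' r' t' := by
    rw [Finset.sum_comm]
    exact Finset.sum_congr rfl fun s' _ => Finset.sum_comm
  unfold tripleDemean
  simp only [Finset.sum_sub_distrib, Finset.sum_add_distrib, ← Finset.sum_div,
    Finset.sum_const, Finset.card_univ, nsmul_eq_mul, h1, h2, h3]
  field_simp
  ring

lemma sum_td_r (X : S → R → T → ℝ) (s : S) (t : T) :
    ∑ r, tripleDemean X s r t = 0 := by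
  have hS : (Fintype.card S : ℝ) ≠ 0 := Nat.cast_ne_zero.mpr Fintype.card_ne_zero
  have hR : (Fintype.card R : ℝ) ≠ 0 := Nat.cast_ne_zero.mpr Fintype.card_ne_zero
  have hT : (Fintype.card T : ℝ) ≠ 0 := Nat.cast_ne_zero.mpr Fintype.card_ne_zero
  have h1 : ∑ r, ∑ s', X s' r t = ∑ s', ∑ r', X s' r' t := Finset.sum_comm
  have h2 : ∑ r, ∑ s', ∑ t', X s' r t' = ∑ s', ∑ r', ∑ t', X s' r' t' := Finset.sum_comm
  unfold tripleDemean
  simp only [Finset.sum_sub_distrib, Finset.sum_add_distrib, ← Finset.sum_div,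
    Finset.sum_const, Finset.card_univ, nsmul_eq_mul, h1, h2]
  field_simp
  ring

lemma sum_td_s (X : S → R → T → ℝ) (r : R) (t : T) :
    ∑ s, tripleDemean X s r t = 0 := by
  have hS : (Fintype.card S : ℝ) ≠ 0 := Nat.cast_ne_zero.mpr Fintype.card_ne_zero
  have hR : (Fintype.card R : ℝ) ≠ 0 := Nat.cast_ne_zero.mpr Fintype.card_ne_zero
  have hT : (Fintype.card T : ℝ) ≠ 0 := Nat.cast_ne_zero.mpr Fintype.card_ne_zero
  unfold tripleDemean
  simp only [Finset.sum_sub_distrib, Finset.sum_add_distrib, ← Finset.sum_div,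
    Finset.sum_const, Finset.card_univ, nsmul_eq_mul]
  field_simp
  ring

/-- The triple-demeaned function is orthogonal to any additive (two-way fixed effects)
function. -/
lemma td_mul_additive (X : S → R → T → ℝ) (α : S → R → ℝ) (γ : S → T → ℝ) (δ : R → T → ℝ) :
    ∑ s, ∑ r, ∑ t, tripleDemean X s r t * (α s r + γ s t + δ r t) = 0 := by
  have e1 : ∑ s, ∑ r, ∑ t, tripleDemean X s r t * α s r = 0 := by
    refine Finset.sum_eq_zero fun s _ => Finset.sum_eq_zero fun r _ => ?_
    rw [← Finset.sum_mul, sum_td_t, zero_mul]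
  have e2 : ∑ s, ∑ r, ∑ t, tripleDemean X s r t * γ s t = 0 := by
    refine Finset.sum_eq_zero fun s _ => ?_
    rw [Finset.sum_comm]
    refine Finset.sum_eq_zero fun t _ => ?_
    rw [← Finset.sum_mul, sum_td_r, zero_mul]
  have e3 : ∑ s, ∑ r, ∑ t, tripleDemean X s r t * δ r t = 0 := by
    have : ∑ s, ∑ r, ∑ t, tripleDemean X s r t * δ r t
        = ∑ r, ∑ t, (∑ s, tripleDemean X s r t) * δ r t := by
      rw [Finset.sum_comm]
      exact Finset.sum_congr rfl fun r _ => by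
        rw [Finset.sum_comm]
        exact Finset.sum_congr rfl fun t _ => (Finset.sum_mul _ _ _).symm
    rw [this]
    refine Finset.sum_eq_zero fun r _ => Finset.sum_eq_zero fun t _ => ?_
    rw [sum_td_s, zero_mul]
  calc ∑ s, ∑ r, ∑ t, tripleDemean X s r t * (α s r + γ s t + δ r t)
      = (∑ s, ∑ r, ∑ t, tripleDemean X s r t * α s r)
        + (∑ s, ∑ r, ∑ t, tripleDemean X s r t * γ s t)
        + (∑ s, ∑ r, ∑ t, tripleDemean X s r t * δ r t) := by
        simp only [mul_add, Finset.sum_add_distrib]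
    _ = 0 := by rw [e1, e2, e3]; ring

/-- `X − X̃` is an additive (two-way fixed effects) function. -/
lemma td_decomp (X : S → R → T → ℝ) :
    ∃ (α : S → R → ℝ) (γ : S → T → ℝ) (δ : R → T → ℝ),
      ∀ s r t, X s r t = tripleDemean X s r t + (α s r + γ s t + δ r t) := by
  refine ⟨fun s r => (∑ t', X s r t') / (Fintype.card T : ℝ)
      - (∑ r', ∑ t', X s r' t') / ((Fintype.card R : ℝ) * (Fintype.card T : ℝ)),
    fun s t => (∑ r', X s r' t) / (Fintype.card R : ℝ)
      - (∑ s', ∑ r', X s' r' t) / ((Fintype.card S : ℝ) * (Fintype.card R : ℝ))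
      + (∑ s', ∑ r', ∑ t', X s' r' t') /
        ((Fintype.card S : ℝ) * (Fintype.card R : ℝ) * (Fintype.card T : ℝ)),
    fun r t => (∑ s', X s' r t) / (Fintype.card S : ℝ)
      - (∑ s', ∑ t', X s' r t') / ((Fintype.card S : ℝ) * (Fintype.card T : ℝ)),
    fun s r t => ?_⟩
  unfold tripleDemean
  ring

/-- First-order conditions for the triple-differences OLS problem. -/
lemma td_foc (Y D : S → R → T → ℝ) (τhat : ℝ)
    (α : S → R → ℝ) (γ : S → T → ℝ) (δ : R → T → ℝ)
    (hmin : ∀ (τ' : ℝ) (α' : S → R → ℝ) (γ' : S → T → ℝ) (δ' : R → T → ℝ),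
      tdObjective Y D τhat α γ δ ≤ tdObjective Y D τ' α' γ' δ')
    (dτ : ℝ) (dα : S → R → ℝ) (dγ : S → T → ℝ) (dδ : R → T → ℝ) :
    ∑ s, ∑ r, ∑ t, (Y s r t - τhat * D s r t - α s r - γ s t - δ r t) *
      (dτ * D s r t + dα s r + dγ s t + dδ r t) = 0 := by
  set e : S → R → T → ℝ := fun s r t => Y s r t - τhat * D s r t - α s r - γ s t - δ r t
    with he
  set g : S → R → T → ℝ := fun s r t => dτ * D s r t + dα s r + dγ s t + dδ r t with hg
  set A : ℝ := ∑ s, ∑ r, ∑ t, e s r t * g s r t with hA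
  set B : ℝ := ∑ s, ∑ r, ∑ t, (g s r t) ^ 2 with hB
  have hq : ∀ h : ℝ, 0 ≤ h ^ 2 * B - 2 * h * A := by
    intro h
    have hobj := hmin (τhat + h * dτ) (fun s r => α s r + h * dα s r)
      (fun s t => γ s t + h * dγ s t) (fun r t => δ r t + h * dδ r t)
    unfold tdObjective at hobj
    have hexp : (∑ s, ∑ r, ∑ t, (Y s r t - (τhat + h * dτ) * D s r t - (α s r + h * dα s r)
          - (γ s t + h * dγ s t) - (δ r t + h * dδ r t)) ^ 2)
        = (∑ s, ∑ r, ∑ t, (e s r t) ^ 2) + (h ^ 2 * B - 2 * h * A) := by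
      rw [hA, hB]
      simp only [Finset.mul_sum, ← Finset.sum_sub_distrib, ← Finset.sum_add_distrib]
      refine Finset.sum_congr rfl fun s _ => Finset.sum_congr rfl fun r _ =>
        Finset.sum_congr rfl fun t _ => ?_
      simp only [he, hg]
      ring
    rw [hexp] at hobj
    have heq : (∑ s, ∑ r, ∑ t, (Y s r t - τhat * D s r t - α s r - γ s t - δ r t) ^ 2)
        = ∑ s, ∑ r, ∑ t, (e s r t) ^ 2 := rfl
    rw [heq] at hobj
    linarith
  have hBnn : 0 ≤ B := by
    rw [hB]
    exact Finset.sum_nonneg fun s _ => Finset.sum_nonneg fun r _ =>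
      Finset.sum_nonneg fun t _ => sq_nonneg _
  have hB1 : (0:ℝ) < B + 1 := by linarith
  set c : ℝ := A / (B + 1) with hc
  have hcA : c * (B + 1) = A := div_mul_cancel₀ A (ne_of_gt hB1)
  have h2 := hq c
  rw [← hcA] at h2
  have hc2 : c ^ 2 ≤ 0 := by nlinarith [sq_nonneg c, hBnn]
  have hc0 : c = 0 := by
    have := le_antisymm hc2 (sq_nonneg c)
    exact pow_eq_zero_iff (by norm_num) |>.mp this
  rw [← hcA, hc0, zero_mul]

end Aux

/-- Lemma 1: Frisch–Waugh–Lovell closed form for the triple-differences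
regression OLS estimator:
`τ̂ = (∑_{s,r,t} D_{srt}·Ỹ_{srt}) / (∑_{s,r,t} (D̃_{srt})²)`. -/
theorem tdols_closed_form
    {S R T : Type*} [Fintype S] [Fintype R] [Fintype T]
    [Nonempty S] [Nonempty R] [Nonempty T]
    (Y D : S → R → T → ℝ)
    (hbin : ∀ s r t, D s r t = 0 ∨ D s r t = 1)
    (hden : ∑ s, ∑ r, ∑ t, (tripleDemean D s r t) ^ 2 ≠ 0)
    (τhat : ℝ) (hτ : IsTDOLS Y D τhat) :
    τhat = (∑ s, ∑ r, ∑ t, D s r t * tripleDemean Y s r t) /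
      (∑ s, ∑ r, ∑ t, (tripleDemean D s r t) ^ 2) := by
  obtain ⟨α, γ, δ, hmin⟩ := hτ
  obtain ⟨aD, gD, dD, hD⟩ := td_decomp D
  obtain ⟨aY, gY, dY, hY⟩ := td_decomp Y
  set e : S → R → T → ℝ := fun s r t => Y s r t - τhat * D s r t - α s r - γ s t - δ r t
    with he
  -- FOC in direction D
  have hfoc1 : ∑ s, ∑ r, ∑ t, e s r t * D s r t = 0 := by
    have := td_foc Y D τhat α γ δ hmin 1 (fun _ _ => 0) (fun _ _ => 0) (fun _ _ => 0)
    simpa using this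
  -- FOC in additive directions
  have hfoc2 : ∀ (α' : S → R → ℝ) (γ' : S → T → ℝ) (δ' : R → T → ℝ),
      ∑ s, ∑ r, ∑ t, e s r t * (α' s r + γ' s t + δ' r t) = 0 := by
    intro α' γ' δ'
    have := td_foc Y D τhat α γ δ hmin 0 α' γ' δ'
    simpa [add_assoc] using this
  -- hence e ⟂ tripleDemean D
  have he_tD : ∑ s, ∑ r, ∑ t, e s r t * tripleDemean D s r t = 0 := by
    have hpt : ∀ s r t, e s r t * tripleDemean D s r t
        = e s r t * D s r t - e s r t * (aD s r + gD s t + dD r t) := by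
      intro s r t
      rw [hD s r t]
      ring
    calc ∑ s, ∑ r, ∑ t, e s r t * tripleDemean D s r t
        = (∑ s, ∑ r, ∑ t, e s r t * D s r t)
          - ∑ s, ∑ r, ∑ t, e s r t * (aD s r + gD s t + dD r t) := by
          simp only [hpt, Finset.sum_sub_distrib]
      _ = 0 := by rw [hfoc1, hfoc2]; ring
  set den : ℝ := ∑ s, ∑ r, ∑ t, (tripleDemean D s r t) ^ 2 with hden'
  -- expand e · D̃ using the decompositions
  have hmain : ∑ s, ∑ r, ∑ t, e s r t * tripleDemean D s r t
      = (∑ s, ∑ r, ∑ t, Y s r t * tripleDemean D s r t) - τhat * den := by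
    have hpt : ∀ s r t, e s r t * tripleDemean D s r t
        = Y s r t * tripleDemean D s r t
          - (τhat * (tripleDemean D s r t) ^ 2
            + τhat * (tripleDemean D s r t * (aD s r + gD s t + dD r t))
            + tripleDemean D s r t * (α s r + γ s t + δ r t)) := by
      intro s r t
      have hd := hD s r t
      simp only [he]
      rw [hd]; ring
    calc ∑ s, ∑ r, ∑ t, e s r t * tripleDemean D s r t
        = (∑ s, ∑ r, ∑ t, Y s r t * tripleDemean D s r t)
          - ((τhat * ∑ s, ∑ r, ∑ t, (tripleDemean D s r t) ^ 2)
            + (τhat * ∑ s, ∑ r, ∑ t, tripleDemean D s r t * (aD s r + gD s t + dD r t))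
            + ∑ s, ∑ r, ∑ t, tripleDemean D s r t * (α s r + γ s t + δ r t)) := by
          simp only [hpt, Finset.sum_sub_distrib, Finset.sum_add_distrib, Finset.mul_sum]
      _ = (∑ s, ∑ r, ∑ t, Y s r t * tripleDemean D s r t) - τhat * den := by
          rw [td_mul_additive, td_mul_additive, hden']; ring
  -- numerator identity : ∑ D·Ỹ = ∑ Y·D̃
  have hnum1 : ∑ s, ∑ r, ∑ t, D s r t * tripleDemean Y s r t
      = ∑ s, ∑ r, ∑ t, tripleDemean Y s r t * tripleDemean D s r t := by
    have hpt : ∀ s r t, D s r t * tripleDemean Y s r t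
        = tripleDemean Y s r t * tripleDemean D s r t
          + tripleDemean Y s r t * (aD s r + gD s t + dD r t) := by
      intro s r t
      rw [hD s r t]; ring
    calc ∑ s, ∑ r, ∑ t, D s r t * tripleDemean Y s r t
        = (∑ s, ∑ r, ∑ t, tripleDemean Y s r t * tripleDemean D s r t)
          + ∑ s, ∑ r, ∑ t, tripleDemean Y s r t * (aD s r + gD s t + dD r t) := by
          simp only [hpt, Finset.sum_add_distrib]
      _ = _ := by rw [td_mul_additive]; ring
  have hnum2 : ∑ s, ∑ r, ∑ t, Y s r t * tripleDemean D s r t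
      = ∑ s, ∑ r, ∑ t, tripleDemean Y s r t * tripleDemean D s r t := by
    have hpt : ∀ s r t, Y s r t * tripleDemean D s r t
        = tripleDemean Y s r t * tripleDemean D s r t
          + tripleDemean D s r t * (aY s r + gY s t + dY r t) := by
      intro s r t
      rw [hY s r t]; ring
    calc ∑ s, ∑ r, ∑ t, Y s r t * tripleDemean D s r t
        = (∑ s, ∑ r, ∑ t, tripleDemean Y s r t * tripleDemean D s r t)
          + ∑ s, ∑ r, ∑ t, tripleDemean D s r t * (aY s r + gY s t + dY r t) := by
          simp only [hpt, Finset.sum_add_distrib]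
      _ = _ := by rw [td_mul_additive]; ring
  rw [eq_div_iff hden]
  rw [he_tD] at hmain
  rw [hnum1, ← hnum2]
  linarith [hmain]
end

section
/- Denominator identity for binary treatments: if D : S × R × T → ℝ takes values in {0,1}, then ∑_{s,r,t} (D̃_{srt})² = N^{(1)} − (1/|T|)·∑_{s,r} (N^{(1)}_{sr})² − (1/|R|)·∑_{s,t} (N^{(1)}_{st})² − (1/|S|)·∑_{r,t} (N^{(1)}_{rt})² + (1/(|S||R|))·∑_t (N^{(1)}_t)² + (1/(|S||T|))·∑_r (N^{(1)}_r)² + (1/(|R||T|))·∑_s (N^{(1)}_s)² − (N^{(1)})²/(|S||R||T|). -/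
open Finset

private lemma mulA0 {c : ℝ} (hc : c ≠ 0) (x : ℝ) : c * (x / c) = x := by
  rw [mul_comm, div_mul_cancel₀ _ hc]

private lemma mulR0 {c : ℝ} (hc : c ≠ 0) (x y : ℝ) : c * (x / (y * c)) = x / y := by
  rw [mul_comm, div_mul_eq_mul_div, mul_div_mul_right _ _ hc]

private lemma mulL0 {c : ℝ} (hc : c ≠ 0) (x y : ℝ) : c * (x / (c * y)) = x / y := by
  rw [mul_comm c y]; exact mulR0 hc x y

private lemma mulM0 {c : ℝ} (hc : c ≠ 0) (x y z : ℝ) : c * (x / (y * c * z)) = x / (y * z) := by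
  rw [show y * c * z = c * (y * z) by ring]; exact mulL0 hc x (y * z)

private lemma mulM1 {c : ℝ} (hc : c ≠ 0) (x y z : ℝ) : c * (x / (c * y * z)) = x / (y * z) := by
  rw [mul_assoc]; exact mulL0 hc x (y * z)

private lemma sq_div_helper {α : Type*} [Fintype α] (f : α → ℝ) (c : ℝ) :
    ∑ x, f x * ((∑ y, f y) / c) = (∑ x, f x) ^ 2 / c := by
  rw [← Finset.sum_mul, ← mul_div_assoc, ← sq]

private lemma sq_div_helper2 {α β : Type*} [Fintype α] [Fintype β] (f : α → β → ℝ) (c : ℝ) :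
    ∑ x, ∑ y, f x y * ((∑ x', ∑ y', f x' y') / c) = (∑ x, ∑ y, f x y) ^ 2 / c := by
  simp only [← Finset.sum_mul]
  rw [← mul_div_assoc, ← sq]

private lemma sq_div_helper3 {α β γ : Type*} [Fintype α] [Fintype β] [Fintype γ]
    (f : α → β → γ → ℝ) (c : ℝ) :
    ∑ x, ∑ y, ∑ z, f x y z * ((∑ x', ∑ y', ∑ z', f x' y' z') / c)
      = (∑ x, ∑ y, ∑ z, f x y z) ^ 2 / c := by
  simp only [← Finset.sum_mul]
  rw [← mul_div_assoc, ← sq]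

section
variable {S R T : Type*} [Fintype S] [Fintype R] [Fintype T]

private lemma sum3_comm_rt (f : S → R → T → ℝ) :
    ∑ s, ∑ r, ∑ t, f s r t = ∑ s, ∑ t, ∑ r, f s r t :=
  Finset.sum_congr rfl fun _ _ => Finset.sum_comm

private lemma sum3_comm_s_last (f : S → R → T → ℝ) :
    ∑ s, ∑ r, ∑ t, f s r t = ∑ r, ∑ t, ∑ s, f s r t := by
  rw [Finset.sum_comm]
  exact Finset.sum_congr rfl fun _ _ => Finset.sum_comm

private lemma sum3_comm_t_first (f : S → R → T → ℝ) :
    ∑ s, ∑ r, ∑ t, f s r t = ∑ t, ∑ s, ∑ r, f s r t := by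
  rw [sum3_comm_rt f]; exact Finset.sum_comm

private lemma td_sum_t [Nonempty T] (X : S → R → T → ℝ) (s : S) (r : R) :
    ∑ t, tripleDemean X s r t = 0 := by
  have hT : (Fintype.card T : ℝ) ≠ 0 := Nat.cast_ne_zero.2 Fintype.card_ne_zero
  have h1 : ∑ t, ∑ r', X s r' t = ∑ r', ∑ t, X s r' t := Finset.sum_comm
  have h2 : ∑ t, ∑ s', X s' r t = ∑ s', ∑ t, X s' r t := Finset.sum_comm
  have h3 : ∑ t, ∑ s', ∑ r', X s' r' t = ∑ s', ∑ r', ∑ t, X s' r' t := by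
    rw [Finset.sum_comm]; exact Finset.sum_congr rfl fun _ _ => Finset.sum_comm
  simp only [tripleDemean, Finset.sum_sub_distrib, Finset.sum_add_distrib,
    Finset.sum_const, Finset.card_univ, nsmul_eq_mul, ← Finset.sum_div, h1, h2, h3,
    mulA0 hT, mulR0 hT]
  ring

private lemma td_sum_r [Nonempty R] (X : S → R → T → ℝ) (s : S) (t : T) :
    ∑ r, tripleDemean X s r t = 0 := by
  have hR : (Fintype.card R : ℝ) ≠ 0 := Nat.cast_ne_zero.2 Fintype.card_ne_zero
  have h2 : ∑ r, ∑ s', X s' r t = ∑ s', ∑ r', X s' r' t := Finset.sum_comm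
  have h3 : ∑ r, ∑ s', ∑ t', X s' r t' = ∑ s', ∑ r', ∑ t', X s' r' t' := Finset.sum_comm
  simp only [tripleDemean, Finset.sum_sub_distrib, Finset.sum_add_distrib,
    Finset.sum_const, Finset.card_univ, nsmul_eq_mul, ← Finset.sum_div, h2, h3,
    mulA0 hR, mulL0 hR, mulR0 hR, mulM0 hR]
  ring

private lemma td_sum_s [Nonempty S] (X : S → R → T → ℝ) (r : R) (t : T) :
    ∑ s, tripleDemean X s r t = 0 := by
  have hS : (Fintype.card S : ℝ) ≠ 0 := Nat.cast_ne_zero.2 Fintype.card_ne_zero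
  have h1 : ∑ s, ∑ t', X s r t' = ∑ s', ∑ t', X s' r t' := rfl
  have h2 : ∑ s, ∑ r', X s r' t = ∑ s', ∑ r', X s' r' t := rfl
  simp only [tripleDemean, Finset.sum_sub_distrib, Finset.sum_add_distrib,
    Finset.sum_const, Finset.card_univ, nsmul_eq_mul, ← Finset.sum_div, h1, h2,
    mulA0 hS, mulL0 hS, mulM1 hS]
  ring

private lemma contract_t [Nonempty T] (X : S → R → T → ℝ) (g : S → R → ℝ) :
    ∑ s, ∑ r, ∑ t, g s r * tripleDemean X s r t = 0 := by
  simp [← Finset.mul_sum, td_sum_t]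

private lemma contract_r [Nonempty R] (X : S → R → T → ℝ) (g : S → T → ℝ) :
    ∑ s, ∑ r, ∑ t, g s t * tripleDemean X s r t = 0 := by
  rw [sum3_comm_rt]
  simp [← Finset.mul_sum, td_sum_r]

private lemma contract_s [Nonempty S] (X : S → R → T → ℝ) (g : R → T → ℝ) :
    ∑ s, ∑ r, ∑ t, g r t * tripleDemean X s r t = 0 := by
  rw [sum3_comm_s_last]
  simp [← Finset.mul_sum, td_sum_s]

end

/-- denominator identity for binary treatments, expressing
`∑_{s,r,t} (D̃_{srt})²` in terms of the treated counts `N⁽¹⁾`. -/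
theorem denominator_identity_binary
    {S R T : Type*} [Fintype S] [Fintype R] [Fintype T]
    [Nonempty S] [Nonempty R] [Nonempty T]
    (D : S → R → T → ℝ)
    (hbin : ∀ s r t, D s r t = 0 ∨ D s r t = 1) :
    ∑ s, ∑ r, ∑ t, (tripleDemean D s r t) ^ 2 =
      (∑ s, ∑ r, ∑ t, D s r t)
      - (∑ s, ∑ r, (∑ t', D s r t') ^ 2) / (Fintype.card T : ℝ)
      - (∑ s, ∑ t, (∑ r', D s r' t) ^ 2) / (Fintype.card R : ℝ)
      - (∑ r, ∑ t, (∑ s', D s' r t) ^ 2) / (Fintype.card S : ℝ)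
      + (∑ t, (∑ s', ∑ r', D s' r' t) ^ 2) /
          ((Fintype.card S : ℝ) * (Fintype.card R : ℝ))
      + (∑ r, (∑ s', ∑ t', D s' r t') ^ 2) /
          ((Fintype.card S : ℝ) * (Fintype.card T : ℝ))
      + (∑ s, (∑ r', ∑ t', D s r' t') ^ 2) /
          ((Fintype.card R : ℝ) * (Fintype.card T : ℝ))
      - (∑ s, ∑ r, ∑ t, D s r t) ^ 2 /
          ((Fintype.card S : ℝ) * (Fintype.card R : ℝ) * (Fintype.card T : ℝ)) := by
  set cS := (Fintype.card S : ℝ) with hcS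
  set cR := (Fintype.card R : ℝ) with hcR
  set cT := (Fintype.card T : ℝ) with hcT
  -- Step 1: ∑ E² = ∑ D·E
  have step1 : ∑ s, ∑ r, ∑ t, (tripleDemean D s r t) ^ 2
      = ∑ s, ∑ r, ∑ t, D s r t * tripleDemean D s r t := by
    have e : ∀ s r t, (tripleDemean D s r t) ^ 2 =
        D s r t * tripleDemean D s r t
        - ((∑ t', D s r t') / cT) * tripleDemean D s r t
        - ((∑ r', D s r' t) / cR) * tripleDemean D s r t
        - ((∑ s', D s' r t) / cS) * tripleDemean D s r t
        + ((∑ r', ∑ t', D s r' t') / (cR * cT)) * tripleDemean D s r t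
        + ((∑ s', ∑ t', D s' r t') / (cS * cT)) * tripleDemean D s r t
        + ((∑ s', ∑ r', D s' r' t) / (cS * cR)) * tripleDemean D s r t
        - ((∑ s', ∑ r', ∑ t', D s' r' t') / (cS * cR * cT)) * tripleDemean D s r t := by
      intro s r t
      simp only [tripleDemean]
      ring
    simp_rw [e]
    simp only [Finset.sum_add_distrib, Finset.sum_sub_distrib]
    have z1 : ∑ s, ∑ r, ∑ t, ((∑ t', D s r t') / cT) * tripleDemean D s r t = 0 :=
      contract_t D (fun s r => (∑ t', D s r t') / cT)
    have z2 : ∑ s, ∑ r, ∑ t, ((∑ r', D s r' t) / cR) * tripleDemean D s r t = 0 :=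
      contract_r D (fun s t => (∑ r', D s r' t) / cR)
    have z3 : ∑ s, ∑ r, ∑ t, ((∑ s', D s' r t) / cS) * tripleDemean D s r t = 0 :=
      contract_s D (fun r t => (∑ s', D s' r t) / cS)
    have z4 : ∑ s, ∑ r, ∑ t, ((∑ r', ∑ t', D s r' t') / (cR * cT)) * tripleDemean D s r t = 0 :=
      contract_t D (fun s _ => (∑ r', ∑ t', D s r' t') / (cR * cT))
    have z5 : ∑ s, ∑ r, ∑ t, ((∑ s', ∑ t', D s' r t') / (cS * cT)) * tripleDemean D s r t = 0 :=
      contract_t D (fun _ r => (∑ s', ∑ t', D s' r t') / (cS * cT))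
    have z6 : ∑ s, ∑ r, ∑ t, ((∑ s', ∑ r', D s' r' t) / (cS * cR)) * tripleDemean D s r t = 0 :=
      contract_r D (fun _ t => (∑ s', ∑ r', D s' r' t) / (cS * cR))
    have z7 : ∑ s, ∑ r, ∑ t,
        ((∑ s', ∑ r', ∑ t', D s' r' t') / (cS * cR * cT)) * tripleDemean D s r t = 0 :=
      contract_t D (fun _ _ => (∑ s', ∑ r', ∑ t', D s' r' t') / (cS * cR * cT))
    rw [z1, z2, z3, z4, z5, z6, z7]
    ring
  rw [step1]
  -- Step 2: expand ∑ D·E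
  have e2 : ∀ s r t, D s r t * tripleDemean D s r t =
      D s r t
      - D s r t * ((∑ t', D s r t') / cT)
      - D s r t * ((∑ r', D s r' t) / cR)
      - D s r t * ((∑ s', D s' r t) / cS)
      + D s r t * ((∑ r', ∑ t', D s r' t') / (cR * cT))
      + D s r t * ((∑ s', ∑ t', D s' r t') / (cS * cT))
      + D s r t * ((∑ s', ∑ r', D s' r' t) / (cS * cR))
      - D s r t * ((∑ s', ∑ r', ∑ t', D s' r' t') / (cS * cR * cT)) := by
    intro s r t
    simp only [tripleDemean]
    rcases hbin s r t with h | h <;> rw [h] <;> ring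
  simp_rw [e2]
  simp only [Finset.sum_add_distrib, Finset.sum_sub_distrib]
  have h1 : ∑ s, ∑ r, ∑ t, D s r t * ((∑ t', D s r t') / cT)
      = (∑ s, ∑ r, (∑ t', D s r t') ^ 2) / cT := by
    simp only [sq_div_helper, ← Finset.sum_div]
  have h2 : ∑ s, ∑ r, ∑ t, D s r t * ((∑ r', D s r' t) / cR)
      = (∑ s, ∑ t, (∑ r', D s r' t) ^ 2) / cR := by
    have c2 : ∑ s, ∑ r, ∑ t, D s r t * ((∑ r', D s r' t) / cR)
        = ∑ s, ∑ t, ∑ r, D s r t * ((∑ r', D s r' t) / cR) := sum3_comm_rt _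
    rw [c2]
    simp only [sq_div_helper, ← Finset.sum_div]
  have h3 : ∑ s, ∑ r, ∑ t, D s r t * ((∑ s', D s' r t) / cS)
      = (∑ r, ∑ t, (∑ s', D s' r t) ^ 2) / cS := by
    have c3 : ∑ s, ∑ r, ∑ t, D s r t * ((∑ s', D s' r t) / cS)
        = ∑ r, ∑ t, ∑ s, D s r t * ((∑ s', D s' r t) / cS) := sum3_comm_s_last _
    rw [c3]
    simp only [sq_div_helper, ← Finset.sum_div]
  have h4 : ∑ s, ∑ r, ∑ t, D s r t * ((∑ r', ∑ t', D s r' t') / (cR * cT))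
      = (∑ s, (∑ r', ∑ t', D s r' t') ^ 2) / (cR * cT) := by
    simp only [sq_div_helper2, ← Finset.sum_div]
  have h5 : ∑ s, ∑ r, ∑ t, D s r t * ((∑ s', ∑ t', D s' r t') / (cS * cT))
      = (∑ r, (∑ s', ∑ t', D s' r t') ^ 2) / (cS * cT) := by
    have c5 : ∑ s, ∑ r, ∑ t, D s r t * ((∑ s', ∑ t', D s' r t') / (cS * cT))
        = ∑ r, ∑ s, ∑ t, D s r t * ((∑ s', ∑ t', D s' r t') / (cS * cT)) :=
      Finset.sum_comm
    rw [c5]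
    simp only [sq_div_helper2, ← Finset.sum_div]
  have h6 : ∑ s, ∑ r, ∑ t, D s r t * ((∑ s', ∑ r', D s' r' t) / (cS * cR))
      = (∑ t, (∑ s', ∑ r', D s' r' t) ^ 2) / (cS * cR) := by
    have c6 : ∑ s, ∑ r, ∑ t, D s r t * ((∑ s', ∑ r', D s' r' t) / (cS * cR))
        = ∑ t, ∑ s, ∑ r, D s r t * ((∑ s', ∑ r', D s' r' t) / (cS * cR)) :=
      sum3_comm_t_first _
    rw [c6]
    simp only [sq_div_helper2, ← Finset.sum_div]
  have h7 : ∑ s, ∑ r, ∑ t, D s r t * ((∑ s', ∑ r', ∑ t', D s' r' t') / (cS * cR * cT))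
      = (∑ s, ∑ r, ∑ t, D s r t) ^ 2 / (cS * cR * cT) := sq_div_helper3 _ _
  rw [h1, h2, h3, h4, h5, h6, h7]
  ring
end

section
/- Numerator rearrangement into 2x2x2 comparisons: for all Y, D : S × R × T → ℝ, ∑_{s,r,t} D_{srt}·Ỹ_{srt} = (1/(|S||R||T|))·∑_{r∈R} ∑_{s∈S} ∑_{t∈T} ∑_{s'∈S} ∑_{t'∈T} ∑_{r'≠r} D_{srt}·[(Y_{srt} − Y_{srt'} − Y_{s'rt} + Y_{s'rt'}) − (Y_{sr't} − Y_{sr't'} − Y_{s'r't} + Y_{s'r't'})]. -/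
open Finset

lemma sum_compl_singleton' {R : Type*} [Fintype R] [DecidableEq R] (r : R) (f : R → ℝ) :
    ∑ r' ∈ ({r}ᶜ : Finset R), f r' = (∑ r', f r') - f r := by
  have h := Finset.sum_compl_add_sum ({r} : Finset R) f
  simp only [Finset.sum_singleton] at h
  linarith

lemma key_lemma {S R T : Type*} [Fintype S] [Fintype R] [Fintype T] [DecidableEq R]
    [Nonempty S] [Nonempty R] [Nonempty T]
    (Y : S → R → T → ℝ) (s : S) (r : R) (t : T) :
    ∑ s', ∑ t', ∑ r' ∈ ({r}ᶜ : Finset R),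
        ((Y s r t - Y s r t' - Y s' r t + Y s' r t') -
          (Y s r' t - Y s r' t' - Y s' r' t + Y s' r' t')) =
      ((Fintype.card S : ℝ) * (Fintype.card R : ℝ) * (Fintype.card T : ℝ)) *
        tripleDemean Y s r t := by
  have hS : (Fintype.card S : ℝ) ≠ 0 := by positivity
  have hR : (Fintype.card R : ℝ) ≠ 0 := by positivity
  have hT : (Fintype.card T : ℝ) ≠ 0 := by positivity
  have step : ∀ s' t', (∑ r' ∈ ({r}ᶜ : Finset R),
      ((Y s r t - Y s r t' - Y s' r t + Y s' r t') -
        (Y s r' t - Y s r' t' - Y s' r' t + Y s' r' t'))) =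
      (Fintype.card R : ℝ) * (Y s r t - Y s r t' - Y s' r t + Y s' r t') -
        ∑ r', (Y s r' t - Y s r' t' - Y s' r' t + Y s' r' t') := by
    intro s' t'
    rw [sum_compl_singleton']
    simp only [Finset.sum_sub_distrib, Finset.sum_const, Finset.card_univ, nsmul_eq_mul]
    ring
  simp only [step]
  have hc1 : (∑ t' : T, ∑ r' : R, Y s r' t') = ∑ r', ∑ t', Y s r' t' := Finset.sum_comm
  have hc2 : (∑ s' : S, ∑ t' : T, ∑ r' : R, Y s' r' t') = ∑ s', ∑ r', ∑ t', Y s' r' t' :=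
    Finset.sum_congr rfl fun s' _ => Finset.sum_comm
  simp only [Finset.sum_sub_distrib, Finset.sum_add_distrib, Finset.sum_const,
    Finset.card_univ, nsmul_eq_mul, ← Finset.mul_sum]
  rw [hc1, hc2]
  unfold tripleDemean
  field_simp
  ring

/-- rearrangement of the numerator into 2x2x2 comparisons. -/
theorem numerator_as_2x2x2
    {S R T : Type*} [Fintype S] [Fintype R] [Fintype T] [DecidableEq R]
    [Nonempty S] [Nonempty R] [Nonempty T]
    (Y D : S → R → T → ℝ) :
    ∑ s, ∑ r, ∑ t, D s r t * tripleDemean Y s r t =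
      (∑ r, ∑ s, ∑ t, ∑ s', ∑ t', ∑ r' ∈ ({r}ᶜ : Finset R),
        D s r t *
          ((Y s r t - Y s r t' - Y s' r t + Y s' r t') -
            (Y s r' t - Y s r' t' - Y s' r' t + Y s' r' t'))) /
        ((Fintype.card S : ℝ) * (Fintype.card R : ℝ) * (Fintype.card T : ℝ)) := by
  have hS : (Fintype.card S : ℝ) ≠ 0 := by positivity
  have hR : (Fintype.card R : ℝ) ≠ 0 := by positivity
  have hT : (Fintype.card T : ℝ) ≠ 0 := by positivity
  rw [Finset.sum_comm]
  rw [eq_div_iff (by simp [hS, hR, hT])]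
  rw [Finset.sum_mul]
  refine Finset.sum_congr rfl fun r _ => ?_
  rw [Finset.sum_mul]
  refine Finset.sum_congr rfl fun s _ => ?_
  rw [Finset.sum_mul]
  refine Finset.sum_congr rfl fun t _ => ?_
  simp only [← Finset.mul_sum]
  rw [key_lemma Y s r t]; ring
end

section
/- Vanishing of the fifth and sixth primary terms: for all Y, D : S × R × T → ℝ, both ∑_{r∈R} ∑_{s∈S} ∑_{t∈T} ∑_{s'∈S} ∑_{t'∈T} ∑_{r'≠r} D_{srt}·(1 − D_{srt'})·D_{s'rt}·(1 − D_{s'rt'})·Δ(s,r,t,s',t',r') = 0 and ∑_{r∈R} ∑_{s∈S} ∑_{t∈T} ∑_{s'∈S} ∑_{t'∈T} ∑_{r'≠r} D_{srt}·D_{srt'}·(1 − D_{s'rt})·(1 − D_{s'rt'})·Δ(s,r,t,s',t',r') = 0. -/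
open Finset

/-- The 2x2 difference-in-differences
`Ỹ_{srt}^{(s',t')} = Y_{srt} − Y_{s'rt} − Y_{srt'} + Y_{s'rt'}`. -/
def did {S R T : Type*} (Y : S → R → T → ℝ) (s : S) (r : R) (t : T) (s' : S) (t' : T) : ℝ :=
  Y s r t - Y s' r t - Y s r t' + Y s' r t'

/-- The 2x2x2 triple difference `Δ(s,r,t,s',t',r') = Ỹ_{srt}^{(s',t')} − Ỹ_{sr't}^{(s',t')}`. -/
def tripleDiff {S R T : Type*} (Y : S → R → T → ℝ)
    (s : S) (r : R) (t : T) (s' : S) (t' : T) (r' : R) : ℝ :=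
  did Y s r t s' t' - did Y s r' t s' t'

lemma sum_antisymm {α : Type*} [Fintype α] (g : α → α → ℝ)
    (h : ∀ a b, g a b = -g b a) : ∑ a, ∑ b, g a b = 0 := by
  have h2 : ∑ a, ∑ b, g a b = -∑ a, ∑ b, g a b := by
    conv_lhs => rw [Finset.sum_comm]
    calc ∑ b, ∑ a, g a b = ∑ b, ∑ a, -(g b a) := by
          exact Finset.sum_congr rfl fun b _ => Finset.sum_congr rfl fun a _ => h a b
      _ = -∑ b, ∑ a, g b a := by simp [Finset.sum_neg_distrib]
  linarith

/-- vanishing of the fifth and sixth primary terms. -/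
theorem fifth_and_sixth_primary_terms_vanish
    {S R T : Type*} [Fintype S] [Fintype R] [Fintype T] [DecidableEq R]
    [Nonempty S] [Nonempty R] [Nonempty T]
    (Y D : S → R → T → ℝ) :
    (∑ r, ∑ s, ∑ t, ∑ s', ∑ t', ∑ r' ∈ ({r}ᶜ : Finset R),
      D s r t * (1 - D s r t') * D s' r t * (1 - D s' r t') *
        tripleDiff Y s r t s' t' r' = 0) ∧
    (∑ r, ∑ s, ∑ t, ∑ s', ∑ t', ∑ r' ∈ ({r}ᶜ : Finset R),
      D s r t * D s r t' * (1 - D s' r t) * (1 - D s' r t') *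
        tripleDiff Y s r t s' t' r' = 0) := by
  constructor
  · refine Finset.sum_eq_zero fun r _ => ?_
    have hswap : ∀ s : S, (∑ t : T, ∑ s' : S, ∑ t' : T, ∑ r' ∈ ({r}ᶜ : Finset R),
        D s r t * (1 - D s r t') * D s' r t * (1 - D s' r t') *
          tripleDiff Y s r t s' t' r')
        = ∑ s' : S, ∑ t : T, ∑ t' : T, ∑ r' ∈ ({r}ᶜ : Finset R),
        D s r t * (1 - D s r t') * D s' r t * (1 - D s' r t') *
          tripleDiff Y s r t s' t' r' := fun s => Finset.sum_comm
    rw [Finset.sum_congr rfl fun s _ => hswap s]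
    refine sum_antisymm _ fun a b => ?_
    rw [eq_neg_iff_add_eq_zero, ← Finset.sum_add_distrib]
    refine Finset.sum_eq_zero fun t _ => ?_
    rw [← Finset.sum_add_distrib]
    refine Finset.sum_eq_zero fun t' _ => ?_
    rw [← Finset.sum_add_distrib]
    refine Finset.sum_eq_zero fun r' _ => ?_
    simp only [tripleDiff, did]; ring
  · refine Finset.sum_eq_zero fun r _ => ?_
    refine Finset.sum_eq_zero fun s _ => ?_
    have hswap : (∑ t : T, ∑ s' : S, ∑ t' : T, ∑ r' ∈ ({r}ᶜ : Finset R),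
        D s r t * D s r t' * (1 - D s' r t) * (1 - D s' r t') *
          tripleDiff Y s r t s' t' r')
        = ∑ s' : S, ∑ t : T, ∑ t' : T, ∑ r' ∈ ({r}ᶜ : Finset R),
        D s r t * D s r t' * (1 - D s' r t) * (1 - D s' r t') *
          tripleDiff Y s r t s' t' r' := Finset.sum_comm
    rw [hswap]
    refine Finset.sum_eq_zero fun s' _ => ?_
    refine sum_antisymm _ fun a b => ?_
    rw [eq_neg_iff_add_eq_zero, ← Finset.sum_add_distrib]
    refine Finset.sum_eq_zero fun r' _ => ?_
    simp only [tripleDiff, did]; ring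
end

section
/- Flipped-placebo doubling identity (used in the appendix alternate decomposition): for all Y, D : S × R × T → ℝ, ∑_{r∈R} ∑_{s∈S} ∑_{t∈T} ∑_{s'∈S} ∑_{t'∈T} ∑_{r'≠r} [D_{srt}·(1 − D_{srt'})·(1 − D_{s'rt})·(1 − D_{s'rt'})]·[(1 − D_{sr't})·D_{s'r't}·(1 − D_{sr't'})·(1 − D_{s'r't'})]·Δ(s,r,t,s',t',r') = 2·∑_{r∈R} ∑_{s∈S} ∑_{t∈T} ∑_{s'∈S} ∑_{t'∈T} ∑_{r'≠r} [D_{srt}·(1 − D_{srt'})·(1 − D_{s'rt})·(1 − D_{s'rt'})]·[(1 − D_{sr't})·D_{s'r't}·(1 − D_{sr't'})·(1 − D_{s'r't'})]·Ỹ_{srt}^{(s',t')}. -/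
open Finset

/-- flipped-placebo doubling identity (appendix alternate decomposition). -/
theorem flipped_placebo_doubling
    {S R T : Type*} [Fintype S] [Fintype R] [Fintype T] [DecidableEq R]
    [Nonempty S] [Nonempty R] [Nonempty T]
    (Y D : S → R → T → ℝ) :
    ∑ r, ∑ s, ∑ t, ∑ s', ∑ t', ∑ r' ∈ ({r}ᶜ : Finset R),
      (D s r t * (1 - D s r t') * (1 - D s' r t) * (1 - D s' r t')) *
        ((1 - D s r' t) * D s' r' t * (1 - D s r' t') * (1 - D s' r' t')) *
        tripleDiff Y s r t s' t' r' =
    2 * ∑ r, ∑ s, ∑ t, ∑ s', ∑ t', ∑ r' ∈ ({r}ᶜ : Finset R),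
      (D s r t * (1 - D s r t') * (1 - D s' r t) * (1 - D s' r t')) *
        ((1 - D s r' t) * D s' r' t * (1 - D s r' t') * (1 - D s' r' t')) *
        did Y s r t s' t' := by
  have hcompl : ∀ (r : R) (h : R → ℝ),
      ∑ r' ∈ ({r}ᶜ : Finset R), h r' = ∑ r', if r' = r then 0 else h r' := by
    intro r h
    have : ({r}ᶜ : Finset R) = Finset.univ.filter (fun r' => ¬ r' = r) := by ext; simp
    rw [this, Finset.sum_filter]
    simp [ite_not]
  simp only [hcompl]
  have key : ∀ f : R → S → T → S → T → R → ℝ,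
      (∑ r, ∑ s, ∑ t, ∑ s', ∑ t', ∑ r', f r s t s' t' r')
      = ∑ r, ∑ s, ∑ t, ∑ s', ∑ t', ∑ r', f r' s' t s t' r := by
    intro f
    have flat : ∀ g : R → S → T → S → T → R → ℝ,
        (∑ r, ∑ s, ∑ t, ∑ s', ∑ t', ∑ r', g r s t s' t' r')
        = ∑ p : R × S × T × S × T × R,
            g p.1 p.2.1 p.2.2.1 p.2.2.2.1 p.2.2.2.2.1 p.2.2.2.2.2 := by
      intro g; simp [Fintype.sum_prod_type]
    rw [flat, flat]
    exact Fintype.sum_equiv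
      ⟨fun p => (p.2.2.2.2.2, p.2.2.2.1, p.2.2.1, p.2.1, p.2.2.2.2.1, p.1),
       fun p => (p.2.2.2.2.2, p.2.2.2.1, p.2.2.1, p.2.1, p.2.2.2.2.1, p.1),
       fun p => rfl, fun p => rfl⟩ _ _ (fun p => rfl)
  have hsplit : ∀ (p : Prop) [Decidable p] (w x y : ℝ),
      (if p then (0:ℝ) else w * (x - y)) = (if p then 0 else w * x) - (if p then 0 else w * y) := by
    intros p _ w x y; split <;> [simp; ring]
  simp only [tripleDiff, hsplit, Finset.sum_sub_distrib]
  have hB :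
      (∑ r, ∑ s, ∑ t, ∑ s', ∑ t', ∑ r' : R, if r' = r then 0 else
        (D s r t * (1 - D s r t') * (1 - D s' r t) * (1 - D s' r t')) *
          ((1 - D s r' t) * D s' r' t * (1 - D s r' t') * (1 - D s' r' t')) *
          did Y s r' t s' t')
      = -(∑ r, ∑ s, ∑ t, ∑ s', ∑ t', ∑ r' : R, if r' = r then 0 else
        (D s r t * (1 - D s r t') * (1 - D s' r t) * (1 - D s' r t')) *
          ((1 - D s r' t) * D s' r' t * (1 - D s r' t') * (1 - D s' r' t')) *
          did Y s r t s' t') := by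
    rw [key (fun r s t s' t' r' => if r' = r then 0 else
        (D s r t * (1 - D s r t') * (1 - D s' r t) * (1 - D s' r t')) *
          ((1 - D s r' t) * D s' r' t * (1 - D s r' t') * (1 - D s' r' t')) *
          did Y s r' t s' t')]
    simp only [← Finset.sum_neg_distrib]
    refine Finset.sum_congr rfl fun r _ => Finset.sum_congr rfl fun s _ =>
      Finset.sum_congr rfl fun t _ => Finset.sum_congr rfl fun s' _ =>
      Finset.sum_congr rfl fun t' _ => Finset.sum_congr rfl fun r' _ => ?_
    by_cases h : r' = r
    · simp [h]
    · have h' : ¬ r = r' := fun hh => h hh.symm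
      simp only [h, h', if_false]
      unfold did; ring
  rw [hB]
  ring
end

section
/- Regression triple-differences decomposition (Theorem 1): let Y, D : S × R × T → ℝ with D taking values in {0,1} and satisfying staggered adoption, and suppose ω ≠ 0, where ω = |S||R||T|·N^{(1)} − |S||R|·∑_{s,r}(N^{(1)}_{sr})² − |S||T|·∑_{s,t}(N^{(1)}_{st})² − |R||T|·∑_{r,t}(N^{(1)}_{rt})² + |T|·∑_t(N^{(1)}_t)² + |R|·∑_r(N^{(1)}_r)² + |S|·∑_s(N^{(1)}_s)² − (N^{(1)})². Write D^{(0)} = 1 − D. If τ̂ is a triple-differences regression OLS estimator for (Y, D), then τ̂ = ω^{-1}·∑_{r∈R} ∑_{s∈S} ∑_{t∈T} ∑_{s'∈S} ∑_{t'∈T} ∑_{r'≠r} { Δ(s,r,t,s',t',r')·[D_{srt}D^{(0)}_{s'rt}D^{(0)}_{srt'}D^{(0)}_{s'rt'} + D_{srt}D^{(0)}_{s'rt}D_{srt'}D_{s'rt'}]·[D^{(0)}_{sr't}D^{(0)}_{s'r't}D^{(0)}_{sr't'}D^{(0)}_{s'r't'} + D^{(0)}_{sr't}D^{(0)}_{s'r't}D_{sr't'}D_{s'r't'}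 + D^{(0)}_{sr't}D_{s'r't}D^{(0)}_{sr't'}D_{s'r't'} + D_{sr't}D_{s'r't}D_{sr't'}D_{s'r't'} + D_{sr't}D_{s'r't}D^{(0)}_{sr't'}D^{(0)}_{s'r't'} + D_{sr't}D^{(0)}_{s'r't}D_{sr't'}D^{(0)}_{s'r't'}] + Δ(s,r,t,s',t',r')·[D_{srt}D^{(0)}_{s'rt}D^{(0)}_{srt'}D^{(0)}_{s'rt'}]·[D^{(0)}_{sr't}D_{s'r't}D^{(0)}_{sr't'}D^{(0)}_{s'r't'} + D_{sr't}D_{s'r't}D_{sr't'}D^{(0)}_{s'r't'}] + Δ(s,r,t,s',t',r')·[D_{srt}D^{(0)}_{s'rt}D_{srt'}D_{s'rt'}]·[D^{(0)}_{sr't}D_{s'r't}D_{sr't'}D_{s'r't'} + D^{(0)}_{sr't}D^{(0)}_{s'r't}D_{sr't'}D^{(0)}_{s'r't'}] }. -/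
open Finset

/-- The control indicator `D⁽⁰⁾ = 1 − D`. -/
def ctrl {S R T : Type*} (D : S → R → T → ℝ) (s : S) (r : R) (t : T) : ℝ :=
  1 - D s r t

/-- The normalizing constant `ω` from Theorem 1, in terms of the treated counts. -/
noncomputable def omegaTD {S R T : Type*} [Fintype S] [Fintype R] [Fintype T]
    (D : S → R → T → ℝ) : ℝ :=
  (Fintype.card S : ℝ) * (Fintype.card R : ℝ) * (Fintype.card T : ℝ) *
      (∑ s', ∑ r', ∑ t', D s' r' t')
    - (Fintype.card S : ℝ) * (Fintype.card R : ℝ) * (∑ s, ∑ r, (∑ t', D s r t') ^ 2)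
    - (Fintype.card S : ℝ) * (Fintype.card T : ℝ) * (∑ s, ∑ t, (∑ r', D s r' t) ^ 2)
    - (Fintype.card R : ℝ) * (Fintype.card T : ℝ) * (∑ r, ∑ t, (∑ s', D s' r t) ^ 2)
    + (Fintype.card T : ℝ) * (∑ t, (∑ s', ∑ r', D s' r' t) ^ 2)
    + (Fintype.card R : ℝ) * (∑ r, (∑ s', ∑ t', D s' r t') ^ 2)
    + (Fintype.card S : ℝ) * (∑ s, (∑ r', ∑ t', D s r' t') ^ 2)
    - (∑ s', ∑ r', ∑ t', D s' r' t') ^ 2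

/-! ### Auxiliary definitions and lemmas -/

section Aux

variable {S R T : Type*}

/-- The summand of the triple-differences decomposition (verbatim from the theorem). -/
def bigTerm (Y D : S → R → T → ℝ) (r : R) (s : S) (t : T) (s' : S) (t' : T) (r' : R) : ℝ :=
  tripleDiff Y s r t s' t' r' *
    (D s r t * ctrl D s' r t * ctrl D s r t' * ctrl D s' r t' +
      D s r t * ctrl D s' r t * D s r t' * D s' r t') *
    (ctrl D s r' t * ctrl D s' r' t * ctrl D s r' t' * ctrl D s' r' t' +
      ctrl D s r' t * ctrl D s' r' t * D s r' t' * D s' r' t' +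
      ctrl D s r' t * D s' r' t * ctrl D s r' t' * D s' r' t' +
      D s r' t * D s' r' t * D s r' t' * D s' r' t' +
      D s r' t * D s' r' t * ctrl D s r' t' * ctrl D s' r' t' +
      D s r' t * ctrl D s' r' t * D s r' t' * ctrl D s' r' t') +
  tripleDiff Y s r t s' t' r' *
    (D s r t * ctrl D s' r t * ctrl D s r t' * ctrl D s' r t') *
    (ctrl D s r' t * D s' r' t * ctrl D s r' t' * ctrl D s' r' t' +
      D s r' t * D s' r' t * D s r' t' * ctrl D s' r' t') +
  tripleDiff Y s r t s' t' r' *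
    (D s r t * ctrl D s' r t * D s r t' * D s' r t') *
    (ctrl D s r' t * D s' r' t * D s r' t' * D s' r' t' +
      ctrl D s r' t * ctrl D s' r' t * D s r' t' * ctrl D s' r' t')

/-- The target summand: outcome at the base cell times the 2x2x2 triple difference of `D`. -/
def hTerm (Y D : S → R → T → ℝ) (r : R) (s : S) (t : T) (s' : S) (t' : T) (r' : R) : ℝ :=
  Y s r t * tripleDiff D s r t s' t' r'

lemma pair01 {x y : ℝ} (hx : x = 0 ∨ x = 1) (hy : y = 0 ∨ y = 1) (hxy : x ≤ y) :
    (x = 0 ∧ y = 0) ∨ (x = 0 ∧ y = 1) ∨ (x = 1 ∧ y = 1) := by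
  rcases hx with h | h <;> rcases hy with h' | h' <;> subst h <;> subst h' <;>
    revert hxy <;> norm_num

set_option maxHeartbeats 4000000 in
/-- The orbit identity: summing over the 8 reflections of a 2x2x2 comparison,
the decomposition weights reduce to the raw treatment indicator. -/
lemma orbit_identity (Y D : S → R → T → ℝ)
    (hbin : ∀ s r t, D s r t = 0 ∨ D s r t = 1)
    (r r' : R) (s s' : S) (t t' : T)
    (c1 : D s r t ≤ D s r t') (c2 : D s' r t ≤ D s' r t')
    (c3 : D s r' t ≤ D s r' t') (c4 : D s' r' t ≤ D s' r' t') :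
    bigTerm Y D r s t s' t' r' + bigTerm Y D r s' t s t' r' + bigTerm Y D r s t' s' t r' +
      bigTerm Y D r' s t s' t' r + bigTerm Y D r s' t' s t r' + bigTerm Y D r' s' t s t' r +
      bigTerm Y D r' s t' s' t r + bigTerm Y D r' s' t' s t r
    = hTerm Y D r s t s' t' r' + hTerm Y D r s' t s t' r' + hTerm Y D r s t' s' t r' +
      hTerm Y D r' s t s' t' r + hTerm Y D r s' t' s t r' + hTerm Y D r' s' t s t' r +
      hTerm Y D r' s t' s' t r + hTerm Y D r' s' t' s t r := by
  simp only [bigTerm, hTerm, tripleDiff, did, ctrl]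
  obtain ⟨h1, h3⟩ | ⟨h1, h3⟩ | ⟨h1, h3⟩ := pair01 (hbin s r t) (hbin s r t') c1 <;>
    obtain ⟨h2, h4⟩ | ⟨h2, h4⟩ | ⟨h2, h4⟩ := pair01 (hbin s' r t) (hbin s' r t') c2 <;>
      obtain ⟨h5, h7⟩ | ⟨h5, h7⟩ | ⟨h5, h7⟩ := pair01 (hbin s r' t) (hbin s r' t') c3 <;>
        obtain ⟨h6, h8⟩ | ⟨h6, h8⟩ | ⟨h6, h8⟩ := pair01 (hbin s' r' t) (hbin s' r' t') c4 <;>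
          simp only [h1, h2, h3, h4, h5, h6, h7, h8] <;> ring

end Aux

section AuxFin

variable {S R T : Type*} [Fintype S] [Fintype R] [Fintype T]

def swapS : (R × S × T × S × T × R) ≃ (R × S × T × S × T × R) where
  toFun x := (x.1, x.2.2.2.1, x.2.2.1, x.2.1, x.2.2.2.2.1, x.2.2.2.2.2)
  invFun x := (x.1, x.2.2.2.1, x.2.2.1, x.2.1, x.2.2.2.2.1, x.2.2.2.2.2)
  left_inv _ := rfl
  right_inv _ := rfl

def swapT : (R × S × T × S × T × R) ≃ (R × S × T × S × T × R) where
  toFun x := (x.1, x.2.1, x.2.2.2.2.1, x.2.2.2.1, x.2.2.1, x.2.2.2.2.2)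
  invFun x := (x.1, x.2.1, x.2.2.2.2.1, x.2.2.2.1, x.2.2.1, x.2.2.2.2.2)
  left_inv _ := rfl
  right_inv _ := rfl

def swapR : (R × S × T × S × T × R) ≃ (R × S × T × S × T × R) where
  toFun x := (x.2.2.2.2.2, x.2.1, x.2.2.1, x.2.2.2.1, x.2.2.2.2.1, x.1)
  invFun x := (x.2.2.2.2.2, x.2.1, x.2.2.1, x.2.2.2.1, x.2.2.2.2.1, x.1)
  left_inv _ := rfl
  right_inv _ := rfl

lemma six_prod (P : R → S → T → S → T → R → ℝ) :
    ∑ r, ∑ s, ∑ t, ∑ s', ∑ t', ∑ r', P r s t s' t' r'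
      = ∑ x : R × S × T × S × T × R,
          P x.1 x.2.1 x.2.2.1 x.2.2.2.1 x.2.2.2.2.1 x.2.2.2.2.2 := by
  simp only [Fintype.sum_prod_type]

lemma eight_fold (f : (R × S × T × S × T × R) → ℝ) :
    ∑ x : R × S × T × S × T × R,
      (f x + f (swapS x) + f (swapT x) + f (swapR x) + f (swapS (swapT x)) +
        f (swapS (swapR x)) + f (swapT (swapR x)) + f (swapS (swapT (swapR x))))
      = 8 * ∑ x : R × S × T × S × T × R, f x := by
  simp only [Finset.sum_add_distrib]
  have h1 := Equiv.sum_comp (swapS (R := R) (S := S) (T := T)) f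
  have h2 := Equiv.sum_comp (swapT (R := R) (S := S) (T := T)) f
  have h3 := Equiv.sum_comp (swapR (R := R) (S := S) (T := T)) f
  have h4 := Equiv.sum_comp ((swapT (R := R) (S := S) (T := T)).trans swapS) f
  have h5 := Equiv.sum_comp ((swapR (R := R) (S := S) (T := T)).trans swapS) f
  have h6 := Equiv.sum_comp ((swapR (R := R) (S := S) (T := T)).trans swapT) f
  have h7 := Equiv.sum_comp (((swapR (R := R) (S := S) (T := T)).trans swapT).trans swapS) f
  simp only [Equiv.trans_apply] at h4 h5 h6 h7
  rw [h1, h2, h3, h4, h5, h6, h7]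
  ring

/-- Group-averaging over the 8 reflections: the full decomposition sum equals the sum of the
raw `D`-weighted triple differences. -/
lemma sum_big_eq [LinearOrder T] (Y D : S → R → T → ℝ)
    (hbin : ∀ s r t, D s r t = 0 ∨ D s r t = 1)
    (hstag : ∀ (s : S) (r : R) (t t' : T), t ≤ t' → D s r t ≤ D s r t') :
    ∑ r, ∑ s, ∑ t, ∑ s', ∑ t', ∑ r', bigTerm Y D r s t s' t' r'
      = ∑ r, ∑ s, ∑ t, ∑ s', ∑ t', ∑ r', hTerm Y D r s t s' t' r' := by
  rw [six_prod, six_prod]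
  set F : (R × S × T × S × T × R) → ℝ :=
    fun x => bigTerm Y D x.1 x.2.1 x.2.2.1 x.2.2.2.1 x.2.2.2.2.1 x.2.2.2.2.2 with hF
  set H : (R × S × T × S × T × R) → ℝ :=
    fun x => hTerm Y D x.1 x.2.1 x.2.2.1 x.2.2.2.1 x.2.2.2.2.1 x.2.2.2.2.2 with hH
  have key : ∀ x : R × S × T × S × T × R,
      F x + F (swapS x) + F (swapT x) + F (swapR x) + F (swapS (swapT x)) +
        F (swapS (swapR x)) + F (swapT (swapR x)) + F (swapS (swapT (swapR x)))
      = H x + H (swapS x) + H (swapT x) + H (swapR x) + H (swapS (swapT x)) +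
        H (swapS (swapR x)) + H (swapT (swapR x)) + H (swapS (swapT (swapR x))) := by
    rintro ⟨r, s, t, s', t', r'⟩
    show bigTerm Y D r s t s' t' r' + bigTerm Y D r s' t s t' r' + bigTerm Y D r s t' s' t r' +
        bigTerm Y D r' s t s' t' r + bigTerm Y D r s' t' s t r' + bigTerm Y D r' s' t s t' r +
        bigTerm Y D r' s t' s' t r + bigTerm Y D r' s' t' s t r
      = hTerm Y D r s t s' t' r' + hTerm Y D r s' t s t' r' + hTerm Y D r s t' s' t r' +
        hTerm Y D r' s t s' t' r + hTerm Y D r s' t' s t r' + hTerm Y D r' s' t s t' r +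
        hTerm Y D r' s t' s' t r + hTerm Y D r' s' t' s t r
    rcases le_total t t' with h | h
    · exact orbit_identity Y D hbin r r' s s' t t'
        (hstag s r t t' h) (hstag s' r t t' h) (hstag s r' t t' h) (hstag s' r' t t' h)
    · linarith [orbit_identity Y D hbin r r' s s' t' t
        (hstag s r t' t h) (hstag s' r t' t h) (hstag s r' t' t h) (hstag s' r' t' t h)]
  have h8 : (8 : ℝ) * ∑ x, F x = (8 : ℝ) * ∑ x, H x := by
    rw [← eight_fold F, ← eight_fold H]
    exact Finset.sum_congr rfl fun x _ => key x
  linarith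

/-- The scaled triple-demeaning kernel `|S||R||T|·D̃`. -/
noncomputable def Mker (D : S → R → T → ℝ) (s : S) (r : R) (t : T) : ℝ :=
  (Fintype.card S : ℝ) * (Fintype.card T : ℝ) * (Fintype.card R : ℝ) * D s r t
  - (Fintype.card T : ℝ) * (Fintype.card R : ℝ) * (∑ s', D s' r t)
  - (Fintype.card S : ℝ) * (Fintype.card R : ℝ) * (∑ t', D s r t')
  + (Fintype.card R : ℝ) * (∑ s', ∑ t', D s' r t')
  - (Fintype.card S : ℝ) * (Fintype.card T : ℝ) * (∑ r', D s r' t)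
  + (Fintype.card T : ℝ) * (∑ s', ∑ r', D s' r' t)
  + (Fintype.card S : ℝ) * (∑ t', ∑ r', D s r' t')
  - (∑ s', ∑ t', ∑ r', D s' r' t')

lemma tripleDiff_total (D : S → R → T → ℝ) (s : S) (r : R) (t : T) :
    ∑ s', ∑ t', ∑ r', tripleDiff D s r t s' t' r' = Mker D s r t := by
  simp only [tripleDiff, did, Mker, Finset.sum_add_distrib, Finset.sum_sub_distrib,
    Finset.sum_const, Finset.card_univ, nsmul_eq_mul, ← Finset.mul_sum]
  ring

lemma Mker_sum_t (D : S → R → T → ℝ) (s : S) (r : R) : ∑ t, Mker D s r t = 0 := by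
  have e1 : ∑ t, ∑ s', D s' r t = ∑ s', ∑ t', D s' r t' := Finset.sum_comm
  have e2 : ∑ t, ∑ s', ∑ r', D s' r' t = ∑ s', ∑ t', ∑ r', D s' r' t' :=
    Finset.sum_comm
  simp only [Mker, Finset.sum_sub_distrib, Finset.sum_add_distrib, Finset.sum_const,
    Finset.card_univ, nsmul_eq_mul, ← Finset.mul_sum]
  rw [e1, e2]; ring

lemma Mker_sum_s (D : S → R → T → ℝ) (r : R) (t : T) : ∑ s, Mker D s r t = 0 := by
  simp only [Mker, Finset.sum_sub_distrib, Finset.sum_add_distrib, Finset.sum_const,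
    Finset.card_univ, nsmul_eq_mul, ← Finset.mul_sum]
  ring

lemma Mker_sum_r (D : S → R → T → ℝ) (s : S) (t : T) : ∑ r, Mker D s r t = 0 := by
  have e1 : ∑ r, ∑ s', D s' r t = ∑ s', ∑ r', D s' r' t := Finset.sum_comm
  have e2 : ∑ r, ∑ t', D s r t' = ∑ t', ∑ r', D s r' t' := Finset.sum_comm
  have e3 : ∑ r, ∑ s', ∑ t', D s' r t' = ∑ s', ∑ t', ∑ r', D s' r' t' := by
    rw [Finset.sum_comm]
    exact Finset.sum_congr rfl fun _ _ => Finset.sum_comm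
  simp only [Mker, Finset.sum_sub_distrib, Finset.sum_add_distrib, Finset.sum_const,
    Finset.card_univ, nsmul_eq_mul, ← Finset.mul_sum]
  rw [e1, e2, e3]; ring

lemma sum2_mul {A B : Type*} [Fintype A] [Fintype B] (f : A → B → ℝ) (C : ℝ) :
    ∑ a, ∑ b, f a b * C = (∑ a, ∑ b, f a b) * C := by
  rw [Finset.sum_mul]; exact Finset.sum_congr rfl fun a _ => (Finset.sum_mul ..).symm

lemma sum3_mul {A B C' : Type*} [Fintype A] [Fintype B] [Fintype C'] (f : A → B → C' → ℝ)
    (C : ℝ) :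
    ∑ a, ∑ b, ∑ c, f a b c * C = (∑ a, ∑ b, ∑ c, f a b c) * C := by
  rw [Finset.sum_mul]
  exact Finset.sum_congr rfl fun a _ => sum2_mul (f a) C

lemma omega_eq (D : S → R → T → ℝ) (hbin : ∀ s r t, D s r t = 0 ∨ D s r t = 1) :
    ∑ r, ∑ s, ∑ t, D s r t * Mker D s r t = omegaTD D := by
  classical
  set cS := (Fintype.card S : ℝ)
  set cR := (Fintype.card R : ℝ)
  set cT := (Fintype.card T : ℝ)
  have hA : ∑ s', ∑ r', ∑ t', D s' r' t' = ∑ s', ∑ t', ∑ r', D s' r' t' :=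
    Finset.sum_congr rfl fun _ _ => Finset.sum_comm
  have L1 : ∑ r, ∑ s, ∑ t, D s r t * (cS * cT * cR * D s r t)
      = cS * cT * cR * (∑ s', ∑ t', ∑ r', D s' r' t') := by
    have e : ∑ r, ∑ s, ∑ t, D s r t * (cS * cT * cR * D s r t)
        = ∑ r, ∑ s, ∑ t, cS * cT * cR * D s r t := by
      refine Finset.sum_congr rfl fun r _ => Finset.sum_congr rfl fun s _ =>
        Finset.sum_congr rfl fun t _ => ?_
      rcases hbin s r t with h | h <;> rw [h] <;> ring
    rw [e]
    simp only [← Finset.mul_sum]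
    congr 1
    rw [Finset.sum_comm]
    exact Finset.sum_congr rfl fun s _ => Finset.sum_comm
  have L2 : ∑ r, ∑ s, ∑ t, D s r t * (cT * cR * ∑ s', D s' r t)
      = cT * cR * (∑ r, ∑ t, (∑ s', D s' r t) ^ 2) := by
    have e : ∀ r : R, ∑ s, ∑ t, D s r t * (cT * cR * ∑ s', D s' r t)
        = ∑ t, cT * cR * (∑ s', D s' r t) ^ 2 := by
      intro r
      rw [Finset.sum_comm]
      refine Finset.sum_congr rfl fun t _ => ?_
      rw [← Finset.sum_mul]
      ring
    simp only [e, ← Finset.mul_sum]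
  have L3 : ∑ r, ∑ s, ∑ t, D s r t * (cS * cR * ∑ t', D s r t')
      = cS * cR * (∑ s, ∑ r, (∑ t', D s r t') ^ 2) := by
    have e : ∀ (r : R) (s : S), ∑ t, D s r t * (cS * cR * ∑ t', D s r t')
        = cS * cR * (∑ t', D s r t') ^ 2 := by
      intro r s
      rw [← Finset.sum_mul]
      ring
    simp only [e, ← Finset.mul_sum]
    congr 1
    exact Finset.sum_comm
  have L4 : ∑ r, ∑ s, ∑ t, D s r t * (cR * ∑ s', ∑ t', D s' r t')
      = cR * (∑ r, (∑ s', ∑ t', D s' r t') ^ 2) := by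
    have e : ∀ r : R, ∑ s, ∑ t, D s r t * (cR * ∑ s', ∑ t', D s' r t')
        = cR * (∑ s', ∑ t', D s' r t') ^ 2 := by
      intro r
      have : ∑ s, ∑ t, D s r t * (cR * ∑ s', ∑ t', D s' r t')
          = (∑ s, ∑ t, D s r t) * (cR * ∑ s', ∑ t', D s' r t') :=
        sum2_mul (fun s t => D s r t) _
      rw [this]; ring
    simp only [e, ← Finset.mul_sum]
  have L5 : ∑ r, ∑ s, ∑ t, D s r t * (cS * cT * ∑ r', D s r' t)
      = cS * cT * (∑ s, ∑ t, (∑ r', D s r' t) ^ 2) := by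
    have e : ∀ (s : S) (t : T), ∑ r, D s r t * (cS * cT * ∑ r', D s r' t)
        = cS * cT * (∑ r', D s r' t) ^ 2 := by
      intro s t
      rw [← Finset.sum_mul]
      ring
    rw [Finset.sum_comm]
    rw [show (∑ s, ∑ r, ∑ t, D s r t * (cS * cT * ∑ r', D s r' t))
        = ∑ s, ∑ t, ∑ r, D s r t * (cS * cT * ∑ r', D s r' t) from
      Finset.sum_congr rfl fun s _ => Finset.sum_comm]
    simp only [e, ← Finset.mul_sum]
  have L6 : ∑ r, ∑ s, ∑ t, D s r t * (cT * ∑ s', ∑ r', D s' r' t)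
      = cT * (∑ t, (∑ s', ∑ r', D s' r' t) ^ 2) := by
    have step1 : ∑ r, ∑ s, ∑ t, D s r t * (cT * ∑ s', ∑ r', D s' r' t)
        = ∑ t, ∑ r, ∑ s, D s r t * (cT * ∑ s', ∑ r', D s' r' t) := by
      rw [show (∑ r, ∑ s, ∑ t, D s r t * (cT * ∑ s', ∑ r', D s' r' t))
          = ∑ r, ∑ t, ∑ s, D s r t * (cT * ∑ s', ∑ r', D s' r' t) from
        Finset.sum_congr rfl fun r _ => Finset.sum_comm]
      exact Finset.sum_comm
    rw [step1]
    have e : ∀ t : T, ∑ r, ∑ s, D s r t * (cT * ∑ s', ∑ r', D s' r' t)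
        = cT * (∑ s', ∑ r', D s' r' t) ^ 2 := by
      intro t
      have : ∑ r, ∑ s, D s r t * (cT * ∑ s', ∑ r', D s' r' t)
          = (∑ r, ∑ s, D s r t) * (cT * ∑ s', ∑ r', D s' r' t) :=
        sum2_mul (fun r s => D s r t) _
      rw [this, Finset.sum_comm (f := fun r s => D s r t)]
      ring
    simp only [e, ← Finset.mul_sum]
  have L7 : ∑ r, ∑ s, ∑ t, D s r t * (cS * ∑ t', ∑ r', D s r' t')
      = cS * (∑ s, (∑ r', ∑ t', D s r' t') ^ 2) := by
    rw [Finset.sum_comm]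
    have e : ∀ s : S, ∑ r, ∑ t, D s r t * (cS * ∑ t', ∑ r', D s r' t')
        = cS * (∑ r', ∑ t', D s r' t') ^ 2 := by
      intro s
      have : ∑ r, ∑ t, D s r t * (cS * ∑ t', ∑ r', D s r' t')
          = (∑ r, ∑ t, D s r t) * (cS * ∑ t', ∑ r', D s r' t') :=
        sum2_mul (fun r t => D s r t) _
      rw [this, show (∑ t', ∑ r', D s r' t') = ∑ r', ∑ t', D s r' t' from Finset.sum_comm]
      ring
    simp only [e, ← Finset.mul_sum]
  have L8 : ∑ r, ∑ s, ∑ t, D s r t * (∑ s', ∑ t', ∑ r', D s' r' t')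
      = (∑ s', ∑ r', ∑ t', D s' r' t') ^ 2 := by
    have : ∑ r, ∑ s, ∑ t, D s r t * (∑ s', ∑ t', ∑ r', D s' r' t')
        = (∑ r, ∑ s, ∑ t, D s r t) * (∑ s', ∑ t', ∑ r', D s' r' t') :=
      sum3_mul (fun r s t => D s r t) _
    rw [this, ← hA, show (∑ r, ∑ s, ∑ t, D s r t) = ∑ s', ∑ r', ∑ t', D s' r' t' from
      Finset.sum_comm]
    ring
  calc ∑ r, ∑ s, ∑ t, D s r t * Mker D s r t
      = ∑ r, ∑ s, ∑ t, (D s r t * (cS * cT * cR * D s r t)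
          - D s r t * (cT * cR * ∑ s', D s' r t)
          - D s r t * (cS * cR * ∑ t', D s r t')
          + D s r t * (cR * ∑ s', ∑ t', D s' r t')
          - D s r t * (cS * cT * ∑ r', D s r' t)
          + D s r t * (cT * ∑ s', ∑ r', D s' r' t)
          + D s r t * (cS * ∑ t', ∑ r', D s r' t')
          - D s r t * (∑ s', ∑ t', ∑ r', D s' r' t')) := by
        refine Finset.sum_congr rfl fun r _ => Finset.sum_congr rfl fun s _ =>
          Finset.sum_congr rfl fun t _ => ?_
        simp only [Mker]; ring
    _ = omegaTD D := by
        simp only [Finset.sum_add_distrib, Finset.sum_sub_distrib]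
        rw [L1, L2, L3, L4, L5, L6, L7, L8, omegaTD, hA]
        ring

/-! ### First-order conditions -/

lemma foc_aux {ι : Type*} [Fintype ι] (f g : ι → ℝ)
    (h : ∀ x : ℝ, ∑ i, (f i)^2 ≤ ∑ i, (f i - x * g i)^2) : ∑ i, f i * g i = 0 := by
  set B := ∑ i, f i * g i with hB
  set C := ∑ i, (g i)^2 with hCdef
  have hC : 0 ≤ C := Finset.sum_nonneg (fun i _ => sq_nonneg _)
  have key : ∀ x : ℝ, 0 ≤ x^2 * C - 2 * x * B := by
    intro x
    have h2 : ∑ i, (f i - x*g i)^2 = (∑ i, (f i)^2) - 2*x*B + x^2*C := by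
      rw [hB, hCdef, Finset.mul_sum, Finset.mul_sum, ← Finset.sum_sub_distrib,
        ← Finset.sum_add_distrib]
      exact Finset.sum_congr rfl (fun i _ => by ring)
    have h3 := h x
    rw [h2] at h3
    linarith
  have hC1 : (0:ℝ) < C + 1 := by linarith
  set x0 := B / (C+1) with hx0def
  have hx0 : x0 * (C+1) = B := by rw [hx0def, div_mul_cancel₀ B hC1.ne']
  have h4 := key x0
  rw [← hx0] at h4
  have h6 : x0^2 ≤ 0 := by nlinarith
  have h7 : x0 = 0 := by nlinarith [sq_nonneg x0]
  rw [← hx0, h7, zero_mul]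

lemma foc_dir (E V : S → R → T → ℝ)
    (h : ∀ x : ℝ, ∑ s, ∑ r, ∑ t, (E s r t)^2
        ≤ ∑ s, ∑ r, ∑ t, (E s r t - x * V s r t)^2) :
    ∑ s, ∑ r, ∑ t, E s r t * V s r t = 0 := by
  have h' : ∀ x : ℝ, ∑ p : S × R × T, (E p.1 p.2.1 p.2.2)^2
      ≤ ∑ p : S × R × T, (E p.1 p.2.1 p.2.2 - x * V p.1 p.2.1 p.2.2)^2 := by
    intro x
    simp only [Fintype.sum_prod_type]
    exact h x
  have h0 := foc_aux (fun p : S × R × T => E p.1 p.2.1 p.2.2)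
    (fun p : S × R × T => V p.1 p.2.1 p.2.2) h'
  simpa only [Fintype.sum_prod_type] using h0

lemma sum_ite_const {c : Prop} [Decidable c] {ι : Type*} [Fintype ι] (f : ι → ℝ) :
    ∑ i, (if c then f i else 0) = if c then ∑ i, f i else 0 := by
  split_ifs <;> simp

section foc

variable (Y D : S → R → T → ℝ) (τhat : ℝ) (α : S → R → ℝ) (γ : S → T → ℝ) (δ : R → T → ℝ)

/-- The OLS residual. -/
def resid : S → R → T → ℝ := fun s r t => Y s r t - τhat * D s r t - α s r - γ s t - δ r t

variable (hmin : ∀ (τ' : ℝ) (α' : S → R → ℝ) (γ' : S → T → ℝ) (δ' : R → T → ℝ),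
      tdObjective Y D τhat α γ δ ≤ tdObjective Y D τ' α' γ' δ')

include hmin in
lemma focD : ∑ s, ∑ r, ∑ t, resid Y D τhat α γ δ s r t * D s r t = 0 := by
  apply foc_dir
  intro x
  have h := hmin (τhat + x) α γ δ
  have e2 : tdObjective Y D (τhat + x) α γ δ
      = ∑ s, ∑ r, ∑ t, (resid Y D τhat α γ δ s r t - x * D s r t)^2 := by
    refine Finset.sum_congr rfl fun s _ => Finset.sum_congr rfl fun r _ =>
      Finset.sum_congr rfl fun t _ => ?_
    simp only [resid]; ring
  rw [e2] at h
  exact h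

include hmin in
lemma focA (s0 : S) (r0 : R) : ∑ t, resid Y D τhat α γ δ s0 r0 t = 0 := by
  classical
  have key : ∑ s, ∑ r, ∑ t, resid Y D τhat α γ δ s r t *
      (if s = s0 then (if r = r0 then (1:ℝ) else 0) else 0) = 0 := by
    apply foc_dir
    intro x
    have h := hmin τhat
      (fun s r => α s r + x * (if s = s0 then (if r = r0 then (1:ℝ) else 0) else 0)) γ δ
    have e2 : tdObjective Y D τhat
        (fun s r => α s r + x * (if s = s0 then (if r = r0 then (1:ℝ) else 0) else 0)) γ δ
        = ∑ s, ∑ r, ∑ t, (resid Y D τhat α γ δ s r t -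
            x * (if s = s0 then (if r = r0 then (1:ℝ) else 0) else 0))^2 := by
      refine Finset.sum_congr rfl fun s _ => Finset.sum_congr rfl fun r _ =>
        Finset.sum_congr rfl fun t _ => ?_
      simp only [resid]; ring
    rw [e2] at h
    exact h
  simpa only [mul_ite, mul_one, mul_zero, sum_ite_const, Finset.sum_ite_eq',
    Finset.mem_univ, if_true] using key

include hmin in
lemma focG (s0 : S) (t0 : T) : ∑ r, resid Y D τhat α γ δ s0 r t0 = 0 := by
  classical
  have key : ∑ s, ∑ r, ∑ t, resid Y D τhat α γ δ s r t *
      (if s = s0 then (if t = t0 then (1:ℝ) else 0) else 0) = 0 := by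
    apply foc_dir
    intro x
    have h := hmin τhat α
      (fun s t => γ s t + x * (if s = s0 then (if t = t0 then (1:ℝ) else 0) else 0)) δ
    have e2 : tdObjective Y D τhat α
        (fun s t => γ s t + x * (if s = s0 then (if t = t0 then (1:ℝ) else 0) else 0)) δ
        = ∑ s, ∑ r, ∑ t, (resid Y D τhat α γ δ s r t -
            x * (if s = s0 then (if t = t0 then (1:ℝ) else 0) else 0))^2 := by
      refine Finset.sum_congr rfl fun s _ => Finset.sum_congr rfl fun r _ =>
        Finset.sum_congr rfl fun t _ => ?_
      simp only [resid]; ring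
    rw [e2] at h
    exact h
  simpa only [mul_ite, mul_one, mul_zero, sum_ite_const, Finset.sum_ite_eq',
    Finset.mem_univ, if_true] using key

include hmin in
lemma focH (r0 : R) (t0 : T) : ∑ s, resid Y D τhat α γ δ s r0 t0 = 0 := by
  classical
  have key : ∑ s, ∑ r, ∑ t, resid Y D τhat α γ δ s r t *
      (if r = r0 then (if t = t0 then (1:ℝ) else 0) else 0) = 0 := by
    apply foc_dir
    intro x
    have h := hmin τhat α γ
      (fun r t => δ r t + x * (if r = r0 then (if t = t0 then (1:ℝ) else 0) else 0))
    have e2 : tdObjective Y D τhat α γ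
        (fun r t => δ r t + x * (if r = r0 then (if t = t0 then (1:ℝ) else 0) else 0))
        = ∑ s, ∑ r, ∑ t, (resid Y D τhat α γ δ s r t -
            x * (if r = r0 then (if t = t0 then (1:ℝ) else 0) else 0))^2 := by
      refine Finset.sum_congr rfl fun s _ => Finset.sum_congr rfl fun r _ =>
        Finset.sum_congr rfl fun t _ => ?_
      simp only [resid]; ring
    rw [e2] at h
    exact h
  simpa only [mul_ite, mul_one, mul_zero, sum_ite_const, Finset.sum_ite_eq',
    Finset.mem_univ, if_true] using key

end foc

/-- The key projection step: `∑ Y·M = τ̂·ω`. -/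
lemma sum_Y_Mker (Y D : S → R → T → ℝ)
    (hbin : ∀ s r t, D s r t = 0 ∨ D s r t = 1)
    (τhat : ℝ) (hτ : IsTDOLS Y D τhat) :
    ∑ r, ∑ s, ∑ t, Y s r t * Mker D s r t = τhat * omegaTD D := by
  classical
  obtain ⟨α, γ, δ, hmin⟩ := hτ
  set cS := (Fintype.card S : ℝ) with hcS
  set cR := (Fintype.card R : ℝ) with hcR
  set cT := (Fintype.card T : ℝ) with hcT
  set E := resid Y D τhat α γ δ with hE
  have hD := focD Y D τhat α γ δ hmin
  have hA := focA Y D τhat α γ δ hmin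
  have hG := focG Y D τhat α γ δ hmin
  have hH := focH Y D τhat α γ δ hmin
  -- the fixed-effect type components of the kernel
  set AA : S → R → ℝ := fun s r => -(cS * cR * (∑ t', D s r t'))
      + cS * (∑ t', ∑ r', D s r' t') - (∑ s', ∑ t', ∑ r', D s' r' t') with hAA
  set GG : S → T → ℝ := fun s t => -(cS * cT * (∑ r', D s r' t))
      + cT * (∑ s', ∑ r', D s' r' t) with hGG
  set HH : R → T → ℝ := fun r t => -(cT * cR * (∑ s', D s' r t))
      + cR * (∑ s', ∑ t', D s' r t') with hHH
  have hdecomp : ∀ s r t, Mker D s r t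
      = cS * cT * cR * D s r t + AA s r + GG s t + HH r t := by
    intro s r t
    simp only [Mker, hAA, hGG, hHH]
    ring
  have split : ∑ r, ∑ s, ∑ t, Y s r t * Mker D s r t
      = ∑ r, ∑ s, ∑ t, (E s r t * (cS * cT * cR * D s r t)
          + E s r t * AA s r + E s r t * GG s t + E s r t * HH r t
          + τhat * (D s r t * Mker D s r t)
          + α s r * Mker D s r t + γ s t * Mker D s r t + δ r t * Mker D s r t) := by
    refine Finset.sum_congr rfl fun r _ => Finset.sum_congr rfl fun s _ =>
      Finset.sum_congr rfl fun t _ => ?_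
    have hY : Y s r t = E s r t + τhat * D s r t + α s r + γ s t + δ r t := by
      simp only [hE, resid]; ring
    rw [hY, hdecomp s r t]
    ring
  rw [split]
  simp only [Finset.sum_add_distrib]
  -- E ⊥ D term
  have t1 : ∑ r, ∑ s, ∑ t, E s r t * (cS * cT * cR * D s r t) = 0 := by
    have e : ∀ (r : R) (s : S) (t : T), E s r t * (cS * cT * cR * D s r t)
        = cS * cT * cR * (E s r t * D s r t) := fun r s t => by ring
    simp only [e, ← Finset.mul_sum]
    rw [Finset.sum_comm, hD, mul_zero]
  -- E ⊥ AA
  have t2 : ∑ r, ∑ s, ∑ t, E s r t * AA s r = 0 := by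
    have e : ∀ (r : R) (s : S), ∑ t, E s r t * AA s r = 0 := by
      intro r s
      rw [← Finset.sum_mul, hA s r, zero_mul]
    simp only [e, Finset.sum_const_zero]
  -- E ⊥ GG
  have t3 : ∑ r, ∑ s, ∑ t, E s r t * GG s t = 0 := by
    rw [Finset.sum_comm]
    have e : ∀ s : S, ∑ r, ∑ t, E s r t * GG s t = 0 := by
      intro s
      rw [Finset.sum_comm]
      have e2 : ∀ t : T, ∑ r, E s r t * GG s t = 0 := by
        intro t
        rw [← Finset.sum_mul, hG s t, zero_mul]
      simp only [e2, Finset.sum_const_zero]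
    simp only [e, Finset.sum_const_zero]
  -- E ⊥ HH
  have t4 : ∑ r, ∑ s, ∑ t, E s r t * HH r t = 0 := by
    have e : ∀ r : R, ∑ s, ∑ t, E s r t * HH r t = 0 := by
      intro r
      rw [Finset.sum_comm]
      have e2 : ∀ t : T, ∑ s, E s r t * HH r t = 0 := by
        intro t
        rw [← Finset.sum_mul, hH r t, zero_mul]
      simp only [e2, Finset.sum_const_zero]
    simp only [e, Finset.sum_const_zero]
  -- D·M term
  have t5 : ∑ r, ∑ s, ∑ t, τhat * (D s r t * Mker D s r t) = τhat * omegaTD D := by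
    simp only [← Finset.mul_sum]
    rw [omega_eq D hbin]
  -- α term
  have t6 : ∑ r, ∑ s, ∑ t, α s r * Mker D s r t = 0 := by
    have e : ∀ (r : R) (s : S), ∑ t, α s r * Mker D s r t = 0 := by
      intro r s
      rw [← Finset.mul_sum, Mker_sum_t, mul_zero]
    simp only [e, Finset.sum_const_zero]
  -- γ term
  have t7 : ∑ r, ∑ s, ∑ t, γ s t * Mker D s r t = 0 := by
    rw [Finset.sum_comm]
    have e : ∀ s : S, ∑ r, ∑ t, γ s t * Mker D s r t = 0 := by
      intro s
      rw [Finset.sum_comm]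
      have e2 : ∀ t : T, ∑ r, γ s t * Mker D s r t = 0 := by
        intro t
        rw [← Finset.mul_sum, Mker_sum_r, mul_zero]
      simp only [e2, Finset.sum_const_zero]
    simp only [e, Finset.sum_const_zero]
  -- δ term
  have t8 : ∑ r, ∑ s, ∑ t, δ r t * Mker D s r t = 0 := by
    have e : ∀ r : R, ∑ s, ∑ t, δ r t * Mker D s r t = 0 := by
      intro r
      rw [Finset.sum_comm]
      have e2 : ∀ t : T, ∑ s, δ r t * Mker D s r t = 0 := by
        intro t
        rw [← Finset.mul_sum, Mker_sum_s, mul_zero]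
      simp only [e2, Finset.sum_const_zero]
    simp only [e, Finset.sum_const_zero]
  rw [t1, t2, t3, t4, t5, t6, t7, t8]
  ring

lemma bigTerm_self (Y D : S → R → T → ℝ) (r : R) (s : S) (t : T) (s' : S) (t' : T) :
    bigTerm Y D r s t s' t' r = 0 := by
  simp [bigTerm, tripleDiff]

lemma hTerm_total (Y D : S → R → T → ℝ) :
    ∑ r, ∑ s, ∑ t, ∑ s', ∑ t', ∑ r', hTerm Y D r s t s' t' r'
      = ∑ r, ∑ s, ∑ t, Y s r t * Mker D s r t := by
  refine Finset.sum_congr rfl fun r _ => Finset.sum_congr rfl fun s _ =>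
    Finset.sum_congr rfl fun t _ => ?_
  simp only [hTerm, ← Finset.mul_sum]
  rw [tripleDiff_total]

end AuxFin

/-- Theorem 1: the regression triple-differences decomposition into its
component 2x2x2 triple-difference comparisons. -/
theorem regression_triple_differences_decomposition
    {S R T : Type*} [Fintype S] [Fintype R] [Fintype T] [DecidableEq R] [LinearOrder T]
    [Nonempty S] [Nonempty R] [Nonempty T]
    (Y D : S → R → T → ℝ)
    (hbin : ∀ s r t, D s r t = 0 ∨ D s r t = 1)
    (hstag : ∀ (s : S) (r : R) (t t' : T), t ≤ t' → D s r t ≤ D s r t')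
    (hω : omegaTD D ≠ 0)
    (τhat : ℝ) (hτ : IsTDOLS Y D τhat) :
    τhat = (omegaTD D)⁻¹ *
      ∑ r, ∑ s, ∑ t, ∑ s', ∑ t', ∑ r' ∈ ({r}ᶜ : Finset R),
        (tripleDiff Y s r t s' t' r' *
          (D s r t * ctrl D s' r t * ctrl D s r t' * ctrl D s' r t' +
            D s r t * ctrl D s' r t * D s r t' * D s' r t') *
          (ctrl D s r' t * ctrl D s' r' t * ctrl D s r' t' * ctrl D s' r' t' +
            ctrl D s r' t * ctrl D s' r' t * D s r' t' * D s' r' t' +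
            ctrl D s r' t * D s' r' t * ctrl D s r' t' * D s' r' t' +
            D s r' t * D s' r' t * D s r' t' * D s' r' t' +
            D s r' t * D s' r' t * ctrl D s r' t' * ctrl D s' r' t' +
            D s r' t * ctrl D s' r' t * D s r' t' * ctrl D s' r' t') +
        tripleDiff Y s r t s' t' r' *
          (D s r t * ctrl D s' r t * ctrl D s r t' * ctrl D s' r t') *
          (ctrl D s r' t * D s' r' t * ctrl D s r' t' * ctrl D s' r' t' +
            D s r' t * D s' r' t * D s r' t' * ctrl D s' r' t') +
        tripleDiff Y s r t s' t' r' *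
          (D s r t * ctrl D s' r t * D s r t' * D s' r t') *
          (ctrl D s r' t * D s' r' t * D s r' t' * D s' r' t' +
            ctrl D s r' t * ctrl D s' r' t * D s r' t' * ctrl D s' r' t')) := by
  have hmain : ∑ r, ∑ s, ∑ t, ∑ s', ∑ t', ∑ r' ∈ ({r}ᶜ : Finset R),
      bigTerm Y D r s t s' t' r' = τhat * omegaTD D := by
    have hcompl : ∀ (r : R) (s : S) (t : T) (s' : S) (t' : T),
        ∑ r' ∈ ({r}ᶜ : Finset R), bigTerm Y D r s t s' t' r'
          = ∑ r', bigTerm Y D r s t s' t' r' := by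
      intro r s t s' t'
      have h := Finset.sum_compl_add_sum ({r} : Finset R) (bigTerm Y D r s t s' t')
      rw [Finset.sum_singleton, bigTerm_self, add_zero] at h
      exact h
    calc ∑ r, ∑ s, ∑ t, ∑ s', ∑ t', ∑ r' ∈ ({r}ᶜ : Finset R), bigTerm Y D r s t s' t' r'
        = ∑ r, ∑ s, ∑ t, ∑ s', ∑ t', ∑ r', bigTerm Y D r s t s' t' r' := by
          refine Finset.sum_congr rfl fun r _ => Finset.sum_congr rfl fun s _ =>
            Finset.sum_congr rfl fun t _ => Finset.sum_congr rfl fun s' _ =>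
            Finset.sum_congr rfl fun t' _ => ?_
          exact hcompl r s t s' t'
      _ = ∑ r, ∑ s, ∑ t, ∑ s', ∑ t', ∑ r', hTerm Y D r s t s' t' r' :=
          sum_big_eq Y D hbin hstag
      _ = ∑ r, ∑ s, ∑ t, Y s r t * Mker D s r t := hTerm_total Y D
      _ = τhat * omegaTD D := sum_Y_Mker Y D hbin τhat hτ
  show τhat = (omegaTD D)⁻¹ *
      ∑ r, ∑ s, ∑ t, ∑ s', ∑ t', ∑ r' ∈ ({r}ᶜ : Finset R), bigTerm Y D r s t s' t' r'
  rw [hmain]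
  field_simp
end

section
/- Alternate decomposition of the numerator into 2x2x2 and double-counted 2x2 terms (appendix form): let Y, D : S × R × T → ℝ with D taking values in {0,1} and satisfying staggered adoption; write D^{(0)} = 1 − D. Then |S||R||T|·∑_{s,r,t} D_{srt}·Ỹ_{srt} = ∑_{r∈R} ∑_{s∈S} ∑_{t∈T} ∑_{s'∈S} ∑_{t'∈T} ∑_{r'≠r} { Δ(s,r,t,s',t',r')·[D_{srt}D^{(0)}_{s'rt}D^{(0)}_{srt'}D^{(0)}_{s'rt'} + D_{srt}D^{(0)}_{s'rt}D_{srt'}D_{s'rt'}]·[D^{(0)}_{sr't}D^{(0)}_{s'r't}D^{(0)}_{sr't'}D^{(0)}_{s'r't'} + D^{(0)}_{sr't}D^{(0)}_{s'r't}D_{sr't'}D_{s'r't'} + D^{(0)}_{sr't}D_{s'r't}D^{(0)}_{sr't'}D_{s'r't'} + D_{sr't}D_{s'r't}D_{sr't'}D_{s'r't'} + D_{sr't}D_{s'r't}D^{(0)}_{sr't'}D^{(0)}_{s'r't'} + D_{sr't}D^{(0)}_{s'r't}D_{sr't'}D^{(0)}_{s'r't'}] + 2·Ỹ_{srt}^{(s',t')}·[D_{srt}D^{(0)}_{s'rt}D^{(0)}_{srt'}D^{(0)}_{s'rt'}]·[D^{(0)}_{sr't}D_{s'r't}D^{(0)}_{sr't'}D^{(0)}_{s'r't'}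 + D_{sr't}D_{s'r't}D_{sr't'}D^{(0)}_{s'r't'}] + 2·Ỹ_{srt}^{(s',t')}·[D_{srt}D^{(0)}_{s'rt}D_{srt'}D_{s'rt'}]·[D^{(0)}_{sr't}D_{s'r't}D_{sr't'}D_{s'r't'} + D^{(0)}_{sr't}D^{(0)}_{s'r't}D_{sr't'}D^{(0)}_{s'r't'}] }. -/
open Finset

abbrev Qt (S R T : Type*) := R × S × T × S × T × R

section
variable {S R T : Type*}

def swS : Qt S R T → Qt S R T :=
  fun p => (p.1, p.2.2.2.1, p.2.2.1, p.2.1, p.2.2.2.2.1, p.2.2.2.2.2)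
def swT : Qt S R T → Qt S R T :=
  fun p => (p.1, p.2.1, p.2.2.2.2.1, p.2.2.2.1, p.2.2.1, p.2.2.2.2.2)
def swR : Qt S R T → Qt S R T :=
  fun p => (p.2.2.2.2.2, p.2.1, p.2.2.1, p.2.2.2.1, p.2.2.2.2.1, p.1)

lemma sum_invol {α : Type*} [Fintype α] (H : α → ℝ) (e : α → α) (he : Function.Involutive e) :
    ∑ p, H (e p) = ∑ p, H p :=
  Fintype.sum_bijective e he.bijective _ _ fun _ => rfl

lemma agg [Fintype S] [Fintype R] [Fintype T] (G F : Qt S R T → ℝ)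
    (h : ∀ p : Qt S R T,
      G p + G (swS p) + G (swT p) + G (swS (swT p)) + G (swR p) + G (swS (swR p)) +
        G (swT (swR p)) + G (swS (swT (swR p))) =
      F p + F (swS p) + F (swT p) + F (swS (swT p)) + F (swR p) + F (swS (swR p)) +
        F (swT (swR p)) + F (swS (swT (swR p)))) :
    ∑ p, G p = ∑ p, F p := by
  have h8 : ∑ p : Qt S R T,
      (G p + G (swS p) + G (swT p) + G (swS (swT p)) + G (swR p) + G (swS (swR p)) +
        G (swT (swR p)) + G (swS (swT (swR p)))) =
      ∑ p : Qt S R T,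
      (F p + F (swS p) + F (swT p) + F (swS (swT p)) + F (swR p) + F (swS (swR p)) +
        F (swT (swR p)) + F (swS (swT (swR p)))) :=
    Finset.sum_congr rfl fun p _ => h p
  simp only [Finset.sum_add_distrib] at h8
  have g2 : ∑ p : Qt S R T, G (swS p) = ∑ p, G p := sum_invol G swS fun _ => rfl
  have g3 : ∑ p : Qt S R T, G (swT p) = ∑ p, G p := sum_invol G swT fun _ => rfl
  have g4 : ∑ p : Qt S R T, G (swS (swT p)) = ∑ p, G p :=
    sum_invol G (fun p => swS (swT p)) fun _ => rfl
  have g5 : ∑ p : Qt S R T, G (swR p) = ∑ p, G p := sum_invol G swR fun _ => rfl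
  have g6 : ∑ p : Qt S R T, G (swS (swR p)) = ∑ p, G p :=
    sum_invol G (fun p => swS (swR p)) fun _ => rfl
  have g7 : ∑ p : Qt S R T, G (swT (swR p)) = ∑ p, G p :=
    sum_invol G (fun p => swT (swR p)) fun _ => rfl
  have g8 : ∑ p : Qt S R T, G (swS (swT (swR p))) = ∑ p, G p :=
    sum_invol G (fun p => swS (swT (swR p))) fun _ => rfl
  have f2 : ∑ p : Qt S R T, F (swS p) = ∑ p, F p := sum_invol F swS fun _ => rfl
  have f3 : ∑ p : Qt S R T, F (swT p) = ∑ p, F p := sum_invol F swT fun _ => rfl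
  have f4 : ∑ p : Qt S R T, F (swS (swT p)) = ∑ p, F p :=
    sum_invol F (fun p => swS (swT p)) fun _ => rfl
  have f5 : ∑ p : Qt S R T, F (swR p) = ∑ p, F p := sum_invol F swR fun _ => rfl
  have f6 : ∑ p : Qt S R T, F (swS (swR p)) = ∑ p, F p :=
    sum_invol F (fun p => swS (swR p)) fun _ => rfl
  have f7 : ∑ p : Qt S R T, F (swT (swR p)) = ∑ p, F p :=
    sum_invol F (fun p => swT (swR p)) fun _ => rfl
  have f8 : ∑ p : Qt S R T, F (swS (swT (swR p))) = ∑ p, F p :=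
    sum_invol F (fun p => swS (swT (swR p))) fun _ => rfl
  rw [g2, g3, g4, g5, g6, g7, g8, f2, f3, f4, f5, f6, f7, f8] at h8
  linarith


lemma nestQt [Fintype S] [Fintype R] [Fintype T] (H : Qt S R T → ℝ) :
    ∑ p : Qt S R T, H p =
      ∑ r, ∑ s, ∑ t, ∑ s', ∑ t', ∑ r', H (r, s, t, s', t', r') := by
  simp only [Fintype.sum_prod_type]

end

lemma sumDelta {S R T : Type*} [Fintype S] [Fintype R] [Fintype T]
    [Nonempty S] [Nonempty R] [Nonempty T]
    (Y : S → R → T → ℝ) (s : S) (r : R) (t : T) :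
    ∑ s', ∑ t', ∑ r', tripleDiff Y s r t s' t' r'
      = (Fintype.card S : ℝ) * (Fintype.card R : ℝ) * (Fintype.card T : ℝ) *
          tripleDemean Y s r t := by
  have hS : ((Fintype.card S : ℝ)) ≠ 0 := Nat.cast_ne_zero.mpr Fintype.card_ne_zero
  have hR : ((Fintype.card R : ℝ)) ≠ 0 := Nat.cast_ne_zero.mpr Fintype.card_ne_zero
  have hT : ((Fintype.card T : ℝ)) ≠ 0 := Nat.cast_ne_zero.mpr Fintype.card_ne_zero
  have hc1 : (∑ t' : T, ∑ r' : R, Y s r' t') = ∑ r', ∑ t', Y s r' t' := Finset.sum_comm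
  have hc2 : ∀ s' : S, (∑ t' : T, ∑ r' : R, Y s' r' t') = ∑ r', ∑ t', Y s' r' t' :=
    fun s' => Finset.sum_comm
  simp only [tripleDiff, did, tripleDemean, Finset.sum_sub_distrib, Finset.sum_add_distrib,
    Finset.sum_const, Finset.card_univ, nsmul_eq_mul, ← Finset.mul_sum, hc1, hc2]
  field_simp
  ring

section TDHelper

variable {S R T : Type*}

/-- the RHS summand of the decomposition. -/
def gterm (Y D : S → R → T → ℝ) (s : S) (r : R) (t : T) (s' : S) (t' : T) (r' : R) : ℝ :=
  tripleDiff Y s r t s' t' r' *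
      (D s r t * ctrl D s' r t * ctrl D s r t' * ctrl D s' r t' +
        D s r t * ctrl D s' r t * D s r t' * D s' r t') *
      (ctrl D s r' t * ctrl D s' r' t * ctrl D s r' t' * ctrl D s' r' t' +
        ctrl D s r' t * ctrl D s' r' t * D s r' t' * D s' r' t' +
        ctrl D s r' t * D s' r' t * ctrl D s r' t' * D s' r' t' +
        D s r' t * D s' r' t * D s r' t' * D s' r' t' +
        D s r' t * D s' r' t * ctrl D s r' t' * ctrl D s' r' t' +
        D s r' t * ctrl D s' r' t * D s r' t' * ctrl D s' r' t') +
    2 * did Y s r t s' t' *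
      (D s r t * ctrl D s' r t * ctrl D s r t' * ctrl D s' r t') *
      (ctrl D s r' t * D s' r' t * ctrl D s r' t' * ctrl D s' r' t' +
        D s r' t * D s' r' t * D s r' t' * ctrl D s' r' t') +
    2 * did Y s r t s' t' *
      (D s r t * ctrl D s' r t * D s r t' * D s' r t') *
      (ctrl D s r' t * D s' r' t * D s r' t' * D s' r' t' +
        ctrl D s r' t * ctrl D s' r' t * D s r' t' * ctrl D s' r' t')

/-- the LHS summand. -/
def fterm (Y D : S → R → T → ℝ) (s : S) (r : R) (t : T) (s' : S) (t' : T) (r' : R) : ℝ :=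
  D s r t * tripleDiff Y s r t s' t' r'

set_option maxHeartbeats 2000000 in
lemma kernel (ya yb yc yd ye yf yg yh a b c d e f g h : ℝ)
    (hba : a = 0 ∨ a = 1) (hbb : b = 0 ∨ b = 1) (hbc : c = 0 ∨ c = 1) (hbd : d = 0 ∨ d = 1)
    (hbe : e = 0 ∨ e = 1) (hbf : f = 0 ∨ f = 1) (hbg : g = 0 ∨ g = 1) (hbh : h = 0 ∨ h = 1)
    (h1 : a ≤ c) (h2 : b ≤ d) (h3 : e ≤ g) (h4 : f ≤ h) :
    (((ya - yb - yc + yd) - (ye - yf - yg + yh)) *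
        (a * (1 - b) * (1 - c) * (1 - d) +
          a * (1 - b) * c * d) *
        ((1 - e) * (1 - f) * (1 - g) * (1 - h) +
          (1 - e) * (1 - f) * g * h +
          (1 - e) * f * (1 - g) * h +
          e * f * g * h +
          e * f * (1 - g) * (1 - h) +
          e * (1 - f) * g * (1 - h)) +
      2 * (ya - yb - yc + yd) *
        (a * (1 - b) * (1 - c) * (1 - d)) *
        ((1 - e) * f * (1 - g) * (1 - h) +
          e * f * g * (1 - h)) +
      2 * (ya - yb - yc + yd) *
        (a * (1 - b) * c * d) *
        ((1 - e) * f * g * h +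
          (1 - e) * (1 - f) * g * (1 - h))) +
      (((yb - ya - yd + yc) - (yf - ye - yh + yg)) *
        (b * (1 - a) * (1 - d) * (1 - c) +
          b * (1 - a) * d * c) *
        ((1 - f) * (1 - e) * (1 - h) * (1 - g) +
          (1 - f) * (1 - e) * h * g +
          (1 - f) * e * (1 - h) * g +
          f * e * h * g +
          f * e * (1 - h) * (1 - g) +
          f * (1 - e) * h * (1 - g)) +
      2 * (yb - ya - yd + yc) *
        (b * (1 - a) * (1 - d) * (1 - c)) *
        ((1 - f) * e * (1 - h) * (1 - g) +
          f * e * h * (1 - g)) +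
      2 * (yb - ya - yd + yc) *
        (b * (1 - a) * d * c) *
        ((1 - f) * e * h * g +
          (1 - f) * (1 - e) * h * (1 - g))) +
      (((yc - yd - ya + yb) - (yg - yh - ye + yf)) *
        (c * (1 - d) * (1 - a) * (1 - b) +
          c * (1 - d) * a * b) *
        ((1 - g) * (1 - h) * (1 - e) * (1 - f) +
          (1 - g) * (1 - h) * e * f +
          (1 - g) * h * (1 - e) * f +
          g * h * e * f +
          g * h * (1 - e) * (1 - f) +
          g * (1 - h) * e * (1 - f)) +
      2 * (yc - yd - ya + yb) *
        (c * (1 - d) * (1 - a) * (1 - b)) *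
        ((1 - g) * h * (1 - e) * (1 - f) +
          g * h * e * (1 - f)) +
      2 * (yc - yd - ya + yb) *
        (c * (1 - d) * a * b) *
        ((1 - g) * h * e * f +
          (1 - g) * (1 - h) * e * (1 - f))) +
      (((yd - yc - yb + ya) - (yh - yg - yf + ye)) *
        (d * (1 - c) * (1 - b) * (1 - a) +
          d * (1 - c) * b * a) *
        ((1 - h) * (1 - g) * (1 - f) * (1 - e) +
          (1 - h) * (1 - g) * f * e +
          (1 - h) * g * (1 - f) * e +
          h * g * f * e +
          h * g * (1 - f) * (1 - e) +
          h * (1 - g) * f * (1 - e)) +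
      2 * (yd - yc - yb + ya) *
        (d * (1 - c) * (1 - b) * (1 - a)) *
        ((1 - h) * g * (1 - f) * (1 - e) +
          h * g * f * (1 - e)) +
      2 * (yd - yc - yb + ya) *
        (d * (1 - c) * b * a) *
        ((1 - h) * g * f * e +
          (1 - h) * (1 - g) * f * (1 - e))) +
      (((ye - yf - yg + yh) - (ya - yb - yc + yd)) *
        (e * (1 - f) * (1 - g) * (1 - h) +
          e * (1 - f) * g * h) *
        ((1 - a) * (1 - b) * (1 - c) * (1 - d) +
          (1 - a) * (1 - b) * c * d +
          (1 - a) * b * (1 - c) * d +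
          a * b * c * d +
          a * b * (1 - c) * (1 - d) +
          a * (1 - b) * c * (1 - d)) +
      2 * (ye - yf - yg + yh) *
        (e * (1 - f) * (1 - g) * (1 - h)) *
        ((1 - a) * b * (1 - c) * (1 - d) +
          a * b * c * (1 - d)) +
      2 * (ye - yf - yg + yh) *
        (e * (1 - f) * g * h) *
        ((1 - a) * b * c * d +
          (1 - a) * (1 - b) * c * (1 - d))) +
      (((yf - ye - yh + yg) - (yb - ya - yd + yc)) *
        (f * (1 - e) * (1 - h) * (1 - g) +
          f * (1 - e) * h * g) *
        ((1 - b) * (1 - a) * (1 - d) * (1 - c) +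
          (1 - b) * (1 - a) * d * c +
          (1 - b) * a * (1 - d) * c +
          b * a * d * c +
          b * a * (1 - d) * (1 - c) +
          b * (1 - a) * d * (1 - c)) +
      2 * (yf - ye - yh + yg) *
        (f * (1 - e) * (1 - h) * (1 - g)) *
        ((1 - b) * a * (1 - d) * (1 - c) +
          b * a * d * (1 - c)) +
      2 * (yf - ye - yh + yg) *
        (f * (1 - e) * h * g) *
        ((1 - b) * a * d * c +
          (1 - b) * (1 - a) * d * (1 - c))) +
      (((yg - yh - ye + yf) - (yc - yd - ya + yb)) *
        (g * (1 - h) * (1 - e) * (1 - f) +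
          g * (1 - h) * e * f) *
        ((1 - c) * (1 - d) * (1 - a) * (1 - b) +
          (1 - c) * (1 - d) * a * b +
          (1 - c) * d * (1 - a) * b +
          c * d * a * b +
          c * d * (1 - a) * (1 - b) +
          c * (1 - d) * a * (1 - b)) +
      2 * (yg - yh - ye + yf) *
        (g * (1 - h) * (1 - e) * (1 - f)) *
        ((1 - c) * d * (1 - a) * (1 - b) +
          c * d * a * (1 - b)) +
      2 * (yg - yh - ye + yf) *
        (g * (1 - h) * e * f) *
        ((1 - c) * d * a * b +
          (1 - c) * (1 - d) * a * (1 - b))) +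
      (((yh - yg - yf + ye) - (yd - yc - yb + ya)) *
        (h * (1 - g) * (1 - f) * (1 - e) +
          h * (1 - g) * f * e) *
        ((1 - d) * (1 - c) * (1 - b) * (1 - a) +
          (1 - d) * (1 - c) * b * a +
          (1 - d) * c * (1 - b) * a +
          d * c * b * a +
          d * c * (1 - b) * (1 - a) +
          d * (1 - c) * b * (1 - a)) +
      2 * (yh - yg - yf + ye) *
        (h * (1 - g) * (1 - f) * (1 - e)) *
        ((1 - d) * c * (1 - b) * (1 - a) +
          d * c * b * (1 - a)) +
      2 * (yh - yg - yf + ye) *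
        (h * (1 - g) * f * e) *
        ((1 - d) * c * b * a +
          (1 - d) * (1 - c) * b * (1 - a))) =
      a * ((ya - yb - yc + yd) - (ye - yf - yg + yh)) +
      b * ((yb - ya - yd + yc) - (yf - ye - yh + yg)) +
      c * ((yc - yd - ya + yb) - (yg - yh - ye + yf)) +
      d * ((yd - yc - yb + ya) - (yh - yg - yf + ye)) +
      e * ((ye - yf - yg + yh) - (ya - yb - yc + yd)) +
      f * ((yf - ye - yh + yg) - (yb - ya - yd + yc)) +
      g * ((yg - yh - ye + yf) - (yc - yd - ya + yb)) +
      h * ((yh - yg - yf + ye) - (yd - yc - yb + ya)) := by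
  rcases hba with rfl|rfl <;> rcases hbc with rfl|rfl <;>
    rcases hbb with rfl|rfl <;> rcases hbd with rfl|rfl <;>
    rcases hbe with rfl|rfl <;> rcases hbg with rfl|rfl <;>
    rcases hbf with rfl|rfl <;> rcases hbh with rfl|rfl <;>
    first
    | linarith
    | ring

lemma key1 (Y D : S → R → T → ℝ) (hbin : ∀ s r t, D s r t = 0 ∨ D s r t = 1)
    (s s' : S) (r r' : R) (t t' : T)
    (h1 : D s r t ≤ D s r t') (h2 : D s' r t ≤ D s' r t')
    (h3 : D s r' t ≤ D s r' t') (h4 : D s' r' t ≤ D s' r' t') :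
    gterm Y D s r t s' t' r' +
      gterm Y D s' r t s t' r' +
      gterm Y D s r t' s' t r' +
      gterm Y D s' r t' s t r' +
      gterm Y D s r' t s' t' r +
      gterm Y D s' r' t s t' r +
      gterm Y D s r' t' s' t r +
      gterm Y D s' r' t' s t r =
    fterm Y D s r t s' t' r' +
      fterm Y D s' r t s t' r' +
      fterm Y D s r t' s' t r' +
      fterm Y D s' r t' s t r' +
      fterm Y D s r' t s' t' r +
      fterm Y D s' r' t s t' r +
      fterm Y D s r' t' s' t r +
      fterm Y D s' r' t' s t r := by
  simp only [gterm, fterm, tripleDiff, did, ctrl]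
  exact kernel (Y s r t) (Y s' r t) (Y s r t') (Y s' r t') (Y s r' t) (Y s' r' t)
    (Y s r' t') (Y s' r' t') (D s r t) (D s' r t) (D s r t') (D s' r t')
    (D s r' t) (D s' r' t) (D s r' t') (D s' r' t')
    (hbin s r t) (hbin s' r t) (hbin s r t') (hbin s' r t')
    (hbin s r' t) (hbin s' r' t) (hbin s r' t') (hbin s' r' t') h1 h2 h3 h4

lemma key [LinearOrder T] (Y D : S → R → T → ℝ)
    (hbin : ∀ s r t, D s r t = 0 ∨ D s r t = 1)
    (hstag : ∀ (s : S) (r : R) (t t' : T), t ≤ t' → D s r t ≤ D s r t')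
    (s s' : S) (r r' : R) (t t' : T) :
    gterm Y D s r t s' t' r' +
      gterm Y D s' r t s t' r' +
      gterm Y D s r t' s' t r' +
      gterm Y D s' r t' s t r' +
      gterm Y D s r' t s' t' r +
      gterm Y D s' r' t s t' r +
      gterm Y D s r' t' s' t r +
      gterm Y D s' r' t' s t r =
    fterm Y D s r t s' t' r' +
      fterm Y D s' r t s t' r' +
      fterm Y D s r t' s' t r' +
      fterm Y D s' r t' s t r' +
      fterm Y D s r' t s' t' r +
      fterm Y D s' r' t s t' r +
      fterm Y D s r' t' s' t r +
      fterm Y D s' r' t' s t r := by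
  rcases le_total t t' with h | h
  · exact key1 Y D hbin s s' r r' t t' (hstag s r t t' h) (hstag s' r t t' h)
      (hstag s r' t t' h) (hstag s' r' t t' h)
  · have H := key1 Y D hbin s s' r r' t' t (hstag s r t' t h) (hstag s' r t' t h)
      (hstag s r' t' t h) (hstag s' r' t' t h)
    linarith

lemma gterm_diag (Y D : S → R → T → ℝ) (hbin : ∀ s r t, D s r t = 0 ∨ D s r t = 1)
    (s : S) (r : R) (t : T) (s' : S) (t' : T) :
    gterm Y D s r t s' t' r = 0 := by
  simp only [gterm, tripleDiff, did, ctrl]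
  rcases hbin s r t with ha | ha <;> rcases hbin s' r t with hb | hb <;>
    rcases hbin s r t' with hc | hc <;> rcases hbin s' r t' with hd | hd <;>
    rw [ha, hb, hc, hd] <;> ring

end TDHelper

/-- alternate decomposition of the numerator into 2x2x2 terms and
double-counted 2x2 difference-in-differences (appendix form). -/
theorem numerator_alternate_decomposition
    {S R T : Type*} [Fintype S] [Fintype R] [Fintype T] [DecidableEq R] [LinearOrder T]
    [Nonempty S] [Nonempty R] [Nonempty T]
    (Y D : S → R → T → ℝ)
    (hbin : ∀ s r t, D s r t = 0 ∨ D s r t = 1)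
    (hstag : ∀ (s : S) (r : R) (t t' : T), t ≤ t' → D s r t ≤ D s r t') :
    (Fintype.card S : ℝ) * (Fintype.card R : ℝ) * (Fintype.card T : ℝ) *
      (∑ s, ∑ r, ∑ t, D s r t * tripleDemean Y s r t) =
      ∑ r, ∑ s, ∑ t, ∑ s', ∑ t', ∑ r' ∈ ({r}ᶜ : Finset R),
        (tripleDiff Y s r t s' t' r' *
          (D s r t * ctrl D s' r t * ctrl D s r t' * ctrl D s' r t' +
            D s r t * ctrl D s' r t * D s r t' * D s' r t') *
          (ctrl D s r' t * ctrl D s' r' t * ctrl D s r' t' * ctrl D s' r' t' +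
            ctrl D s r' t * ctrl D s' r' t * D s r' t' * D s' r' t' +
            ctrl D s r' t * D s' r' t * ctrl D s r' t' * D s' r' t' +
            D s r' t * D s' r' t * D s r' t' * D s' r' t' +
            D s r' t * D s' r' t * ctrl D s r' t' * ctrl D s' r' t' +
            D s r' t * ctrl D s' r' t * D s r' t' * ctrl D s' r' t') +
        2 * did Y s r t s' t' *
          (D s r t * ctrl D s' r t * ctrl D s r t' * ctrl D s' r t') *
          (ctrl D s r' t * D s' r' t * ctrl D s r' t' * ctrl D s' r' t' +
            D s r' t * D s' r' t * D s r' t' * ctrl D s' r' t') +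
        2 * did Y s r t s' t' *
          (D s r t * ctrl D s' r t * D s r t' * D s' r t') *
          (ctrl D s r' t * D s' r' t * D s r' t' * D s' r' t' +
            ctrl D s r' t * ctrl D s' r' t * D s r' t' * ctrl D s' r' t')) := by
  classical
  have hcompl : ∀ (r : R) (s : S) (t : T) (s' : S) (t' : T),
      (∑ r' ∈ ({r}ᶜ : Finset R), gterm Y D s r t s' t' r') =
        ∑ r' : R, gterm Y D s r t s' t' r' := by
    intro r s t s' t'
    have h0 := Finset.sum_compl_add_sum ({r} : Finset R)
      (f := fun r' => gterm Y D s r t s' t' r')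
    rw [Finset.sum_singleton, gterm_diag Y D hbin s r t s' t', add_zero] at h0
    exact h0
  calc (Fintype.card S : ℝ) * (Fintype.card R : ℝ) * (Fintype.card T : ℝ) *
      (∑ s, ∑ r, ∑ t, D s r t * tripleDemean Y s r t)
      = ∑ s, ∑ r, ∑ t, D s r t *
          ((Fintype.card S : ℝ) * (Fintype.card R : ℝ) * (Fintype.card T : ℝ) *
            tripleDemean Y s r t) := by
        simp only [Finset.mul_sum]
        exact Finset.sum_congr rfl fun s _ => Finset.sum_congr rfl fun r _ =>
          Finset.sum_congr rfl fun t _ => by ring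
    _ = ∑ s, ∑ r, ∑ t, ∑ s', ∑ t', ∑ r', fterm Y D s r t s' t' r' := by
        refine Finset.sum_congr rfl fun s _ => Finset.sum_congr rfl fun r _ =>
          Finset.sum_congr rfl fun t _ => ?_
        rw [← sumDelta Y s r t, Finset.mul_sum]
        exact Finset.sum_congr rfl fun s' _ => by
          rw [Finset.mul_sum]
          exact Finset.sum_congr rfl fun t' _ => by rw [Finset.mul_sum]; rfl
    _ = ∑ r, ∑ s, ∑ t, ∑ s', ∑ t', ∑ r', fterm Y D s r t s' t' r' := Finset.sum_comm
    _ = ∑ p : Qt S R T,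
          fterm Y D p.2.1 p.1 p.2.2.1 p.2.2.2.1 p.2.2.2.2.1 p.2.2.2.2.2 :=
        (nestQt (fun p => fterm Y D p.2.1 p.1 p.2.2.1 p.2.2.2.1 p.2.2.2.2.1 p.2.2.2.2.2)).symm
    _ = ∑ p : Qt S R T,
          gterm Y D p.2.1 p.1 p.2.2.1 p.2.2.2.1 p.2.2.2.2.1 p.2.2.2.2.2 :=
        (agg (fun p => gterm Y D p.2.1 p.1 p.2.2.1 p.2.2.2.1 p.2.2.2.2.1 p.2.2.2.2.2)
          (fun p => fterm Y D p.2.1 p.1 p.2.2.1 p.2.2.2.1 p.2.2.2.2.1 p.2.2.2.2.2)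
          (fun p => key Y D hbin hstag p.2.1 p.2.2.2.1 p.1 p.2.2.2.2.2 p.2.2.1
            p.2.2.2.2.1)).symm
    _ = ∑ r, ∑ s, ∑ t, ∑ s', ∑ t', ∑ r' : R, gterm Y D s r t s' t' r' :=
        nestQt (fun p => gterm Y D p.2.1 p.1 p.2.2.1 p.2.2.2.1 p.2.2.2.2.1 p.2.2.2.2.2)
    _ = ∑ r, ∑ s, ∑ t, ∑ s', ∑ t', ∑ r' ∈ ({r}ᶜ : Finset R),
          gterm Y D s r t s' t' r' := by
        exact Finset.sum_congr rfl fun r _ => Finset.sum_congr rfl fun s _ =>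
          Finset.sum_congr rfl fun t _ => Finset.sum_congr rfl fun s' _ =>
            Finset.sum_congr rfl fun t' _ => (hcompl r s t s' t').symm
end
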